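/- arXiv:1602.00610 — 8 statements merged into one kernel-verified Lean document; each statement's English description precedes it below -/
import Mathlib

section
/- Let W be a hyperplane in ℝ^{m+1} (m ≥ 1), let N be a Euclidean unit vector orthogonal to W, and let β be a linear form on ℝ^{m+1} with operator norm ‖β‖ < 1 and β(N) = 0 (so that the dual vector β♯ lies in W). Set c = (1 − ‖β♯‖²)^{1/2} > 0. If n ∈ ℝ^{m+1} satisfies ⟨n,n⟩ = 1, ⟨n,N⟩ > 0, and g_n(n,w) = 0 for all w ∈ W (i.e. n is a normal to W for the Randers norm F), then: (i) n = c·N − β♯; (ii) g_n(u,v) = c²(⟨u,v⟩ − β(u)β(v)) for all u,v ∈ W; (iii) g_n(n,n) = c⁴; and (iv) the vector ν = c⁻²·n satisfies F(ν) = 1, i.e. ν is an F-unit normal to W. -/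
open RealInnerProductSpace

/-- The Randers norm `F(y) = α(y) + β(y)` associated with a linear form `β`. -/
noncomputable def randersF {E : Type*} [NormedAddCommGroup E] [InnerProductSpace ℝ E]
    (β : E →L[ℝ] ℝ) (y : E) : ℝ := ‖y‖ + β y

/-- The fundamental tensor `g_y(u,v) = (1/2)·∂²/∂s∂t [F(y+su+tv)²]|_{s=t=0}` of the
Randers norm `F = α + β`. -/
noncomputable def gTensor {E : Type*} [NormedAddCommGroup E] [InnerProductSpace ℝ E]
    (β : E →L[ℝ] ℝ) (y u v : E) : ℝ :=
  (1 / 2) * deriv (fun s : ℝ => deriv (fun t : ℝ => (randersF β (y + s • u + t • v)) ^ 2) 0) 0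

section aux
variable {E : Type*} [NormedAddCommGroup E] [InnerProductSpace ℝ E]

lemma hasDerivAt_norm_line {f : ℝ → E} {f' : E} {t : ℝ} (hf : HasDerivAt f f' t)
    (h0 : f t ≠ 0) : HasDerivAt (fun s => ‖f s‖) (⟪f t, f'⟫ / ‖f t‖) t := by
  have h1 : HasDerivAt (fun s => ‖f s‖ ^ 2) (2 * ⟪f t, f'⟫) t := hf.norm_sq
  have h2 := h1.sqrt (pow_ne_zero 2 (norm_ne_zero_iff.2 h0))
  simp only [Real.sqrt_sq (norm_nonneg _)] at h2
  rwa [mul_div_mul_left _ _ (two_ne_zero)] at h2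

lemma hasDerivAt_line {p v : E} (t : ℝ) : HasDerivAt (fun s : ℝ => p + s • v) v t := by
  simpa using ((hasDerivAt_id t).smul_const v).const_add p

lemma inner_deriv (β : E →L[ℝ] ℝ) (p v : E) (hp : p ≠ 0) :
    deriv (fun t : ℝ => (randersF β (p + t • v)) ^ 2) 0
      = 2 * ((‖p‖ + β p) * (⟪p, v⟫ / ‖p‖ + β v)) := by
  have hline : HasDerivAt (fun t : ℝ => p + t • v) v 0 := hasDerivAt_line 0
  have hnorm : HasDerivAt (fun t : ℝ => ‖p + t • v‖) (⟪p, v⟫ / ‖p‖) 0 := by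
    have := hasDerivAt_norm_line hline (by simpa using hp)
    simpa using this
  have hβ : HasDerivAt (fun t : ℝ => β (p + t • v)) (β v) 0 := by
    simpa only [Function.comp_def] using (β.hasFDerivAt.comp_hasDerivAt 0 hline)
  have hF : HasDerivAt (fun t : ℝ => randersF β (p + t • v)) (⟪p, v⟫ / ‖p‖ + β v) 0 :=
    hnorm.add hβ
  have hF2 := hF.fun_pow 2
  rw [hF2.deriv]
  have : randersF β (p + (0:ℝ) • v) = ‖p‖ + β p := by simp [randersF]
  rw [this]; ring

lemma gFormula (β : E →L[ℝ] ℝ) (y u v : E) (hy : ‖y‖ = 1) :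
    gTensor β y u v
      = (⟪y, u⟫ + β u) * (⟪y, v⟫ + β v) + (1 + β y) * (⟪u, v⟫ - ⟪y, v⟫ * ⟪y, u⟫) := by
  have hy0 : y ≠ 0 := by intro h; rw [h] at hy; simp at hy
  -- eventual equality
  have hc : Continuous fun s : ℝ => y + s • u := by continuity
  have hev : ∀ᶠ s : ℝ in nhds 0, y + s • u ≠ 0 := by
    have h1 : {z : E | z ≠ 0} ∈ nhds (y + (0:ℝ) • u) := by
      rw [show y + (0:ℝ) • u = y by simp]
      exact isOpen_compl_singleton.mem_nhds hy0
    exact hc.continuousAt.eventually_mem h1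
  have heq : (fun s : ℝ => deriv (fun t : ℝ => (randersF β (y + s • u + t • v)) ^ 2) 0)
      =ᶠ[nhds 0] fun s : ℝ =>
        2 * ((‖y + s • u‖ + β (y + s • u)) * (⟪y + s • u, v⟫ / ‖y + s • u‖ + β v)) := by
    filter_upwards [hev] with s hs
    exact inner_deriv β (y + s • u) v hs
  have hderiv_eq := heq.deriv_eq
  -- derivative of the RHS
  have hline : HasDerivAt (fun s : ℝ => y + s • u) u 0 := hasDerivAt_line 0
  have hnorm : HasDerivAt (fun s : ℝ => ‖y + s • u‖) ⟪y, u⟫ 0 := by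
    have := hasDerivAt_norm_line hline (by simpa using hy0)
    simp only [zero_smul, add_zero, hy, div_one] at this; exact this
  have hβz : HasDerivAt (fun s : ℝ => β (y + s • u)) (β u) 0 := by
    simpa only [Function.comp_def] using (β.hasFDerivAt.comp_hasDerivAt 0 hline)
  have hiv : HasDerivAt (fun s : ℝ => ⟪y + s • u, v⟫) ⟪u, v⟫ 0 := by
    have := HasDerivAt.inner ℝ hline (hasDerivAt_const (0:ℝ) v)
    simpa using this
  have hq : HasDerivAt (fun s : ℝ => ⟪y + s • u, v⟫ / ‖y + s • u‖)
      (⟪u, v⟫ - ⟪y, v⟫ * ⟪y, u⟫) 0 := by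
    have := hiv.fun_div hnorm (by simp only [zero_smul, add_zero, hy]; norm_num)
    simp only [zero_smul, add_zero, hy] at this
    exact this.congr_deriv (by ring)
  have hA : HasDerivAt (fun s : ℝ => ‖y + s • u‖ + β (y + s • u)) (⟪y, u⟫ + β u) 0 :=
    hnorm.add hβz
  have hB : HasDerivAt (fun s : ℝ => ⟪y + s • u, v⟫ / ‖y + s • u‖ + β v)
      (⟪u, v⟫ - ⟪y, v⟫ * ⟪y, u⟫) 0 := hq.add_const (β v)
  have hAB := (hA.fun_mul hB).const_mul (2 : ℝ)
  have hABd := hAB.deriv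
  rw [gTensor, hderiv_eq, hABd]
  simp only [zero_smul, add_zero, hy, div_one]
  ring
end aux

theorem stmt0 {m : ℕ} (hm : 1 ≤ m)
    (W : Submodule ℝ (EuclideanSpace ℝ (Fin (m + 1))))
    (hWdim : Module.finrank ℝ W = m)
    (N : EuclideanSpace ℝ (Fin (m + 1))) (hN : ‖N‖ = 1)
    (hNW : ∀ w ∈ W, ⟪N, w⟫ = 0)
    (β : EuclideanSpace ℝ (Fin (m + 1)) →L[ℝ] ℝ) (hβ : ‖β‖ < 1) (hβN : β N = 0)
    (bs : EuclideanSpace ℝ (Fin (m + 1))) (hbs : ∀ u, ⟪bs, u⟫ = β u)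
    (c : ℝ) (hc : c = Real.sqrt (1 - ‖bs‖ ^ 2))
    (n : EuclideanSpace ℝ (Fin (m + 1)))
    (hn1 : ⟪n, n⟫ = 1) (hnN : 0 < ⟪n, N⟫)
    (hnormal : ∀ w ∈ W, gTensor β n n w = 0) :
    n = c • N - bs ∧
    (∀ u ∈ W, ∀ v ∈ W, gTensor β n u v = c ^ 2 * (⟪u, v⟫ - β u * β v)) ∧
    gTensor β n n n = c ^ 4 ∧
    randersF β ((c ^ 2)⁻¹ • n) = 1 := by
  have hnn : ‖n‖ = 1 := by
    have h := real_inner_self_eq_norm_sq n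
    nlinarith [norm_nonneg n]
  have hβbs : β bs = ‖bs‖ ^ 2 := by rw [← hbs]; exact real_inner_self_eq_norm_sq bs
  have hbsle : ‖bs‖ ≤ ‖β‖ := by
    rcases eq_or_ne bs 0 with h | h
    · simp only [h, norm_zero]; exact norm_nonneg β
    · have h1 := β.le_opNorm bs
      have h2 : ‖bs‖ ^ 2 ≤ ‖β‖ * ‖bs‖ := by
        rw [← hβbs]; exact le_trans (le_abs_self _) h1
      have h3 : 0 < ‖bs‖ := norm_pos_iff.2 h
      nlinarith
  have hbs1 : ‖bs‖ < 1 := lt_of_le_of_lt hbsle hβ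
  have hβn1 : 0 < 1 + β n := by
    have h1 := β.le_opNorm n
    rw [hnn, mul_one] at h1
    have := neg_abs_le (β n)
    have : -(1:ℝ) < β n := by
      have := abs_lt.1 (lt_of_le_of_lt h1 hβ)
      exact this.1
    linarith
  have hperp : ∀ w ∈ W, ⟪n, w⟫ + β w = 0 := by
    intro w hw
    have h := hnormal w hw
    rw [gFormula β n n w hnn, hn1] at h
    have : (1 + β n) * (⟪n, w⟫ + β w) = 0 := by linear_combination h
    rcases mul_eq_zero.1 this with h' | h'
    · linarith
    · exact h'
  -- orthogonal complement is span of N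
  have hN0 : N ≠ 0 := by intro h; rw [h] at hN; simp at hN
  have hNmem : N ∈ Wᗮ := by
    rw [Submodule.mem_orthogonal]
    intro u hu
    rw [real_inner_comm]
    exact hNW u hu
  have hdim : Module.finrank ℝ (Wᗮ) = 1 := by
    have h1 := Submodule.finrank_add_finrank_orthogonal W
    rw [hWdim, finrank_euclideanSpace] at h1
    simp at h1
    omega
  have hspan : Submodule.span ℝ {N} = Wᗮ := by
    apply Submodule.eq_of_le_of_finrank_eq
    · rw [Submodule.span_le]; simp [hNmem]
    · rw [finrank_span_singleton hN0, hdim]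
  have hmem : n + bs ∈ Wᗮ := by
    rw [Submodule.mem_orthogonal]
    intro u hu
    rw [real_inner_comm, inner_add_left, hbs]
    exact hperp u hu
  rw [← hspan] at hmem
  obtain ⟨a, ha⟩ := Submodule.mem_span_singleton.1 hmem
  have hNN : ⟪N, N⟫ = 1 := by
    rw [real_inner_self_eq_norm_sq, hN]; norm_num
  have hbsN : ⟪bs, N⟫ = 0 := by rw [hbs]; exact hβN
  have hNbs : ⟪N, bs⟫ = 0 := by rw [real_inner_comm]; exact hbsN
  have haval : a = ⟪n, N⟫ := by
    have h1 : ⟪a • N, N⟫ = ⟪n, N⟫ + ⟪bs, N⟫ := by rw [ha, inner_add_left]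
    rw [real_inner_smul_left, hNN, hbsN] at h1
    linarith [h1]
  have hapos : 0 < a := by rw [haval]; exact hnN
  have hnval : n = a • N - bs := by
    rw [eq_sub_iff_add_eq]; exact ha.symm
  have hasq : a ^ 2 + ‖bs‖ ^ 2 = 1 := by
    have h1 : ⟪n, n⟫ = a ^ 2 * ⟪N, N⟫ - a * ⟪N, bs⟫ - a * ⟪bs, N⟫ + ⟪bs, bs⟫ := by
      rw [hnval]
      simp only [inner_sub_left, inner_sub_right, real_inner_smul_left, real_inner_smul_right]
      ring
    rw [hn1, hNN, hNbs, hbsN, real_inner_self_eq_norm_sq] at h1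
    linarith
  have hca : c = a := by
    rw [hc, show (1:ℝ) - ‖bs‖ ^ 2 = a ^ 2 by linarith, Real.sqrt_sq hapos.le]
  have hβnval : β n = -‖bs‖ ^ 2 := by
    rw [hnval, map_sub, map_smul, hβN, hβbs]; simp
  have hc2 : 1 + β n = c ^ 2 := by rw [hβnval, hca]; linarith
  have hcpos : 0 < c := hca ▸ hapos
  refine ⟨by rw [hca]; exact hnval, ?_, ?_, ?_⟩
  · intro u hu v hv
    have hnu : ⟪n, u⟫ = -β u := by have := hperp u hu; linarith
    have hnv : ⟪n, v⟫ = -β v := by have := hperp v hv; linarith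
    rw [gFormula β n u v hnn, hnu, hnv, hc2]
    ring
  · rw [gFormula β n n n hnn, hn1, show β n = c ^ 2 - 1 by linarith]
    ring
  · have hc2ne : (c ^ 2 : ℝ) ≠ 0 := by positivity
    rw [randersF, norm_smul, hnn, map_smul]
    rw [show β n = c ^ 2 - 1 by linarith]
    rw [Real.norm_eq_abs, abs_of_pos (by positivity)]
    simp only [smul_eq_mul]
    field_simp
    ring
end

section
/- Let W be a hyperplane in ℝ^{m+1} (m ≥ 1), let N be a Euclidean unit vector orthogonal to W, and let β be a linear form on ℝ^{m+1} with operator norm ‖β‖ < 1 and β(N) = 0 (so that the dual vector β♯ lies in W). Set c = (1 − ‖β♯‖²)^{1/2} > 0, n = c·N − β♯, and g = g_n. If u, U ∈ W satisfy g(u,v) = ⟨U,v⟩ for all v ∈ W, then β(u) = c⁻⁴·β(U) and c²·u = U + c⁻²·β(U)·β♯. -/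
open RealInnerProductSpace

lemma norm_line_hasDerivAt {E : Type*} [NormedAddCommGroup E] [InnerProductSpace ℝ E]
    (y v : E) (hy : y ≠ 0) :
    HasDerivAt (fun t : ℝ => ‖y + t • v‖) (⟪y, v⟫ / ‖y‖) 0 := by
  have hQeq : ∀ t : ℝ, ‖y + t • v‖ ^ 2 = ‖y‖ ^ 2 + 2 * ⟪y, v⟫ * t + ‖v‖ ^ 2 * t ^ 2 := by
    intro t
    rw [norm_add_sq_real, real_inner_smul_right, norm_smul]
    simp [mul_pow]
    ring
  have hQ : HasDerivAt (fun t : ℝ => ‖y‖ ^ 2 + 2 * ⟪y, v⟫ * t + ‖v‖ ^ 2 * t ^ 2)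
      (2 * ⟪y, v⟫) 0 := by
    have h := (((hasDerivAt_id (0:ℝ)).const_mul (2 * ⟪y, v⟫)).const_add (‖y‖ ^ 2)).add
      ((hasDerivAt_pow 2 (0:ℝ)).const_mul (‖v‖ ^ 2))
    exact (h.congr_deriv (by simp)).congr_of_eventuallyEq
      (Filter.Eventually.of_forall fun t => by simp [add_assoc])
  have hsq : HasDerivAt (fun t : ℝ => ‖y + t • v‖ ^ 2) (2 * ⟪y, v⟫) 0 := by
    have hfe : (fun t : ℝ => ‖y‖ ^ 2 + 2 * ⟪y, v⟫ * t + ‖v‖ ^ 2 * t ^ 2)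
        = fun t : ℝ => ‖y + t • v‖ ^ 2 := funext fun t => (hQeq t).symm
    rwa [hfe] at hQ
  have h0 : (fun t : ℝ => ‖y + t • v‖ ^ 2) 0 ≠ 0 := by
    simp [norm_ne_zero_iff.mpr hy, pow_eq_zero_iff]
  have hsqrt := (Real.hasDerivAt_sqrt h0).comp 0 hsq
  have hval : (fun t : ℝ => ‖y + t • v‖ ^ 2) 0 = ‖y‖ ^ 2 := by simp
  have hne : ‖y‖ ≠ 0 := norm_ne_zero_iff.mpr hy
  refine (hsqrt.congr_deriv ?_).congr_of_eventuallyEq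
    (Filter.Eventually.of_forall fun t => ?_)
  · rw [hval, Real.sqrt_sq (norm_nonneg _)]
    field_simp
  · simp [Function.comp, Real.sqrt_sq (norm_nonneg _)]

lemma randers_line_hasDerivAt {E : Type*} [NormedAddCommGroup E] [InnerProductSpace ℝ E]
    (β : E →L[ℝ] ℝ) (y v : E) (hy : y ≠ 0) :
    HasDerivAt (fun t : ℝ => randersF β (y + t • v)) (⟪y, v⟫ / ‖y‖ + β v) 0 := by
  have h1 := norm_line_hasDerivAt y v hy
  have h2 : HasDerivAt (fun t : ℝ => β (y + t • v)) (β v) 0 := by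
    have hfe : (fun t : ℝ => β (y + t • v)) = fun t : ℝ => β y + t * β v := by
      funext t; simp [map_add, β.map_smul, smul_eq_mul]
    rw [hfe]
    simpa using ((hasDerivAt_id (0:ℝ)).mul_const (β v)).const_add (β y)
  exact (h1.add h2).congr_of_eventuallyEq (Filter.Eventually.of_forall fun t => by simp [randersF])

lemma randers_sq_hasDerivAt {E : Type*} [NormedAddCommGroup E] [InnerProductSpace ℝ E]
    (β : E →L[ℝ] ℝ) (y v : E) (hy : y ≠ 0) :
    HasDerivAt (fun t : ℝ => (randersF β (y + t • v)) ^ 2)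
      (2 * (‖y‖ + β y) * (⟪y, v⟫ / ‖y‖ + β v)) 0 := by
  have h := (randers_line_hasDerivAt β y v hy).pow 2
  have h0 : randersF β (y + (0:ℝ) • v) = ‖y‖ + β y := by simp [randersF]
  rw [h0] at h
  exact (h.congr_deriv (by ring)).congr_of_eventuallyEq (Filter.Eventually.of_forall fun t => rfl)

lemma gTensor_eq {E : Type*} [NormedAddCommGroup E] [InnerProductSpace ℝ E]
    (β : E →L[ℝ] ℝ) (y u v : E) (hy : y ≠ 0) :
    gTensor β y u v = (⟪y, u⟫ / ‖y‖ + β u) * (⟪y, v⟫ / ‖y‖ + β v)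
      + (‖y‖ + β y) * ((⟪u, v⟫ * ‖y‖ - ⟪y, v⟫ * (⟪y, u⟫ / ‖y‖)) / ‖y‖ ^ 2) := by
  have hne : ‖y‖ ≠ 0 := norm_ne_zero_iff.mpr hy
  -- the explicit outer function
  set G : ℝ → ℝ := fun s =>
    2 * ((‖y + s • u‖ + (β y + s * β u)) * (⟪y + s • u, v⟫ / ‖y + s • u‖ + β v)) with hG_def
  have hev : (fun s : ℝ => deriv (fun t : ℝ => (randersF β (y + s • u + t • v)) ^ 2) 0)
      =ᶠ[nhds 0] G := by
    have hcont : Continuous fun s : ℝ => y + s • u := by continuity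
    have hne0 : ∀ᶠ s in nhds (0:ℝ), y + s • u ≠ 0 := by
      have h0 : (fun s : ℝ => y + s • u) 0 ≠ 0 := by simpa using hy
      exact hcont.continuousAt.eventually_ne (by simpa using hy)
    filter_upwards [hne0] with s hs
    have hd := (randers_sq_hasDerivAt β (y + s • u) v hs).deriv
    simpa [hG_def, add_assoc, mul_assoc] using hd
  -- derivative of G at 0
  have h0 : y + (0:ℝ) • u = y := by simp
  have hNB : HasDerivAt (fun s : ℝ => ‖y + s • u‖ + (β y + s * β u)) (⟪y, u⟫ / ‖y‖ + β u) 0 := by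
    have h1 := norm_line_hasDerivAt y u hy
    have h2 : HasDerivAt (fun s : ℝ => β y + s * β u) (β u) 0 := by
      simpa using ((hasDerivAt_id (0:ℝ)).mul_const (β u)).const_add (β y)
    exact h1.add h2
  have hN : HasDerivAt (fun s : ℝ => ‖y + s • u‖) (⟪y, u⟫ / ‖y‖) 0 :=
    norm_line_hasDerivAt y u hy
  have hP : HasDerivAt (fun s : ℝ => ⟪y + s • u, v⟫) (⟪u, v⟫) 0 := by
    have hfe : (fun s : ℝ => ⟪y + s • u, v⟫) = fun s : ℝ => ⟪y, v⟫ + s * ⟪u, v⟫ := by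
      funext s; rw [inner_add_left, real_inner_smul_left]
    rw [hfe]
    simpa using ((hasDerivAt_id (0:ℝ)).mul_const (⟪u, v⟫)).const_add (⟪y, v⟫)
  have hPN := hP.div hN (by rw [h0]; exact hne)
  have hG : HasDerivAt G
      (2 * ((⟪y, u⟫ / ‖y‖ + β u) * (⟪y, v⟫ / ‖y‖ + β v)
        + (‖y‖ + β y) * ((⟪u, v⟫ * ‖y‖ - ⟪y, v⟫ * (⟪y, u⟫ / ‖y‖)) / ‖y‖ ^ 2))) 0 := by
    have h := (hNB.mul (hPN.add_const (β v))).const_mul 2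
    simpa [h0] using h
  rw [gTensor, hev.deriv_eq, hG.deriv]
  ring

theorem stmt1 {m : ℕ} (hm : 1 ≤ m)
    (W : Submodule ℝ (EuclideanSpace ℝ (Fin (m + 1))))
    (hWdim : Module.finrank ℝ W = m)
    (N : EuclideanSpace ℝ (Fin (m + 1))) (hN : ‖N‖ = 1)
    (hNW : ∀ w ∈ W, ⟪N, w⟫ = 0)
    (β : EuclideanSpace ℝ (Fin (m + 1)) →L[ℝ] ℝ) (hβ : ‖β‖ < 1) (hβN : β N = 0)
    (bs : EuclideanSpace ℝ (Fin (m + 1))) (hbs : ∀ u, ⟪bs, u⟫ = β u)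
    (c : ℝ) (hc : c = Real.sqrt (1 - ‖bs‖ ^ 2))
    (n : EuclideanSpace ℝ (Fin (m + 1))) (hn : n = c • N - bs)
    (u U : EuclideanSpace ℝ (Fin (m + 1))) (hu : u ∈ W) (hU : U ∈ W)
    (huU : ∀ v ∈ W, gTensor β n u v = ⟪U, v⟫) :
    β u = (c ^ 4)⁻¹ * β U ∧ (c ^ 2) • u = U + ((c ^ 2)⁻¹ * β U) • bs := by
  -- basic facts
  have hβbs : β bs = ‖bs‖ ^ 2 := by
    rw [← hbs bs, real_inner_self_eq_norm_sq]
  have hbs1 : ‖bs‖ < 1 := by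
    have h1 : β bs ≤ ‖β‖ * ‖bs‖ := le_trans (le_abs_self _) (β.le_opNorm bs)
    rw [hβbs] at h1
    nlinarith [norm_nonneg bs, norm_nonneg β]
  have hc2 : c ^ 2 = 1 - ‖bs‖ ^ 2 := by
    rw [hc, Real.sq_sqrt (by nlinarith [norm_nonneg bs])]
  have hcpos : 0 < c := by
    rw [hc]; exact Real.sqrt_pos.mpr (by nlinarith [norm_nonneg bs])
  have hNbs : ⟪N, bs⟫ = 0 := by rw [real_inner_comm, hbs N, hβN]
  have hnn : ‖n‖ = 1 := by
    have h2 : ‖n‖ ^ 2 = 1 := by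
      rw [hn, norm_sub_sq_real, real_inner_smul_left, hNbs, norm_smul, hN]
      simp [Real.norm_eq_abs, mul_pow, sq_abs]
      linarith [hc2]
    nlinarith [norm_nonneg n]
  have hn0 : n ≠ 0 := by
    intro h; rw [h, norm_zero] at hnn; norm_num at hnn
  have hβn : β n = -‖bs‖ ^ 2 := by
    rw [hn, map_sub, β.map_smul, hβN, hβbs]; simp
  have hnu : ⟪n, u⟫ = -β u := by
    rw [hn, inner_sub_left, real_inner_smul_left, hNW u hu, hbs u]; ring
  -- W = (ℝ ∙ N)ᗮ
  have hN0 : N ≠ 0 := by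
    intro h; rw [h, norm_zero] at hN; norm_num at hN
  have hWle : W ≤ (ℝ ∙ N)ᗮ := by
    intro w hw
    rw [Submodule.mem_orthogonal]
    intro x hx
    obtain ⟨a, rfl⟩ := Submodule.mem_span_singleton.mp hx
    rw [real_inner_smul_left, hNW w hw, mul_zero]
  have hWeq : W = (ℝ ∙ N)ᗮ := by
    apply Submodule.eq_of_le_of_finrank_eq hWle
    have h1 : Module.finrank ℝ (ℝ ∙ N) = 1 := finrank_span_singleton hN0
    have h2 := Submodule.finrank_add_finrank_orthogonal (K := (ℝ ∙ N))
    rw [h1] at h2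
    have h3 : Module.finrank ℝ (EuclideanSpace ℝ (Fin (m + 1))) = m + 1 := by
      simp [finrank_euclideanSpace]
    omega
  have hbsW : bs ∈ W := by
    rw [hWeq, Submodule.mem_orthogonal]
    intro x hx
    obtain ⟨a, rfl⟩ := Submodule.mem_span_singleton.mp hx
    rw [real_inner_smul_left, hNbs, mul_zero]
  -- key formula for g on W
  have hkey : ∀ v ∈ W, c ^ 2 * (⟪u, v⟫ - β u * β v) = ⟪U, v⟫ := by
    intro v hv
    have hnv : ⟪n, v⟫ = -β v := by
      rw [hn, inner_sub_left, real_inner_smul_left, hNW v hv, hbs v]; ring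
    have h := huU v hv
    rw [gTensor_eq β n u v hn0, hnn, hnu, hnv, hβn] at h
    rw [← h, hc2]
    ring
  -- the vector identity
  have hz : (c ^ 2) • u - U - (c ^ 2 * β u) • bs = 0 := by
    set z := (c ^ 2) • u - U - (c ^ 2 * β u) • bs with hz_def
    have hzW : z ∈ W := by
      exact Submodule.sub_mem W (Submodule.sub_mem W (Submodule.smul_mem W _ hu) hU)
        (Submodule.smul_mem W _ hbsW)
    have hzz : ⟪z, z⟫ = 0 := by
      have h1 : ∀ v ∈ W, ⟪z, v⟫ = 0 := by
        intro v hv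
        rw [hz_def]
        rw [inner_sub_left, inner_sub_left, real_inner_smul_left, real_inner_smul_left,
          hbs v]
        linear_combination hkey v hv
      exact h1 z hzW
    exact inner_self_eq_zero.mp hzz
  have hmain : (c ^ 2) • u = U + (c ^ 2 * β u) • bs := by
    have h := hz
    rw [sub_sub, sub_eq_zero] at h
    exact h
  -- apply β
  have hβmain : c ^ 2 * β u = β U + c ^ 2 * β u * ‖bs‖ ^ 2 := by
    have := congrArg β hmain
    rw [map_add, β.map_smul, β.map_smul, hβbs] at this
    simpa [smul_eq_mul] using this
  have hc0 : c ≠ 0 := ne_of_gt hcpos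
  have h4 : c ^ 4 * β u = β U := by
    linear_combination hβmain + (c ^ 2 * β u) * hc2
  have hβu : β u = (c ^ 4)⁻¹ * β U := by
    rw [← h4]
    field_simp
  refine ⟨hβu, ?_⟩
  have hco : (c ^ 2)⁻¹ * β U = c ^ 2 * β u := by
    rw [← h4]
    field_simp
  rw [hmain, hco]
end

section
/- Let V be a real inner product space of dimension m > 3, let b ∈ V satisfy 0 < ‖b‖ < 1, set c = (1 − ‖b‖²)^{1/2}, and let z ∈ V. Define the linear operator C̄ : V → V by 2·C̄(u) = ⟨z,u⟩·b + ⟨b,u⟩·z + c⁻²·⟨b,z⟩·(u − ⟨b,u⟩·b), and define T : V → V by T(u) = c⁻²·C̄(u) + c⁻⁴·⟨b, C̄(u)⟩·b. Then T = 0 if and only if z = 0. -/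
open RealInnerProductSpace

theorem stmt3 {V : Type*} [NormedAddCommGroup V] [InnerProductSpace ℝ V]
    [FiniteDimensional ℝ V] {m : ℕ} (hm : 3 < m) (hdim : Module.finrank ℝ V = m)
    (b z : V) (hb0 : 0 < ‖b‖) (hb1 : ‖b‖ < 1)
    (c : ℝ) (hc : c = Real.sqrt (1 - ‖b‖ ^ 2))
    (Cbar T : V → V)
    (hC : ∀ u, (2 : ℝ) • Cbar u =
      ⟪z, u⟫ • b + ⟪b, u⟫ • z + ((c ^ 2)⁻¹ * ⟪b, z⟫) • (u - ⟪b, u⟫ • b))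
    (hT : ∀ u, T u = (c ^ 2)⁻¹ • Cbar u + ((c ^ 4)⁻¹ * ⟪b, Cbar u⟫) • b) :
    (∀ u, T u = 0) ↔ z = 0 := by
  have hb2 : (0:ℝ) < 1 - ‖b‖ ^ 2 := by nlinarith
  have hc2 : c ^ 2 = 1 - ‖b‖ ^ 2 := by rw [hc]; exact Real.sq_sqrt hb2.le
  have hc2pos : (0:ℝ) < c ^ 2 := hc2 ▸ hb2
  have hc4pos : (0:ℝ) < c ^ 4 := by nlinarith
  have hb2' : (0:ℝ) < ‖b‖ ^ 2 := by positivity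
  constructor
  · intro h
    -- First: Cbar b = 0
    have ht : (0:V) = (c ^ 2)⁻¹ • Cbar b + ((c ^ 4)⁻¹ * ⟪b, Cbar b⟫) • b := by
      rw [← hT b, h b]
    have h1 : ⟪b, Cbar b⟫ = 0 := by
      have h2 := congrArg (fun v => ⟪b, v⟫) ht
      simp only [inner_zero_right, inner_add_right, inner_smul_right,
        real_inner_self_eq_norm_sq] at h2
      have key : (0:ℝ) < (c ^ 2)⁻¹ + (c ^ 4)⁻¹ * ‖b‖ ^ 2 :=
        add_pos (inv_pos.mpr hc2pos) (mul_pos (inv_pos.mpr hc4pos) hb2')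
      nlinarith [h2, mul_pos key hb2', key]
    have hCb : Cbar b = 0 := by
      rw [h1, mul_zero, zero_smul, add_zero] at ht
      have h3 := ht.symm
      rwa [smul_eq_zero_iff_right (inv_ne_zero hc2pos.ne')] at h3
    -- Now the defining equation at u = b
    have hE := hC b
    rw [hCb, smul_zero, real_inner_self_eq_norm_sq] at hE
    have hEb := congrArg (fun v => ⟪b, v⟫) hE
    simp only [inner_zero_right, inner_add_right, inner_smul_right, inner_sub_right,
      real_inner_self_eq_norm_sq, real_inner_comm z b] at hEb
    have h3 : (c ^ 2)⁻¹ * (‖b‖ ^ 2 - ‖b‖ ^ 2 * ‖b‖ ^ 2) = ‖b‖ ^ 2 := by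
      have hx : ‖b‖ ^ 2 - ‖b‖ ^ 2 * ‖b‖ ^ 2 = ‖b‖ ^ 2 * c ^ 2 := by rw [hc2]; ring
      rw [hx, mul_comm, mul_assoc, mul_inv_cancel₀ hc2pos.ne', mul_one]
    have hzb : ⟪z, b⟫ = 0 := by
      have h4 : (3:ℝ) * (‖b‖ ^ 2 * ⟪z, b⟫) = 0 := by
        linear_combination (-1 : ℝ) * hEb - ⟪z, b⟫ * h3
      have h5 : ‖b‖ ^ 2 * ⟪z, b⟫ = 0 := by linarith
      rcases mul_eq_zero.mp h5 with h6 | h6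
      · exact absurd h6 hb2'.ne'
      · exact h6
    have hbz : ⟪b, z⟫ = 0 := by rw [real_inner_comm]; exact hzb
    rw [hzb, hbz] at hE
    simp only [zero_smul, mul_zero, zero_add, add_zero] at hE
    have h7 := hE.symm
    rwa [smul_eq_zero_iff_right hb2'.ne'] at h7
  · intro hz u
    have h2 : (2:ℝ) • Cbar u = 0 := by rw [hC u, hz]; simp
    have hCu : Cbar u = 0 := by
      rwa [smul_eq_zero_iff_right (two_ne_zero)] at h2
    simp [hT u, hCu]
end

section
/- Let C, D, A₁, …, A_s be real m×m matrices with rank(A_i) ≤ 1 for 1 ≤ i ≤ s. Then for every k with 1 ≤ k ≤ m, σ_k(C + D + A₁ + ··· + A_s) = σ_k(C) + Σ_{j=1}^{k} σ_{(k−j,j)}(C, D) + Σ_{i=1}^{s} tr( T_{k−1}(C + D + A₁ + ··· + A_{i−1}) · A_i ), where the i = 1 summand is tr(T_{k−1}(C + D)·A₁). -/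
/-- `sigmaP A j` is the coefficient `σ_j(A)` of `t^j` in `det(I + t·A)`. -/
noncomputable def sigmaP {m : ℕ} (A : Matrix (Fin m) (Fin m) ℝ) (j : ℕ) : ℝ :=
  Polynomial.coeff (Matrix.det ((1 : Matrix (Fin m) (Fin m) (Polynomial ℝ)) +
    (Polynomial.X : Polynomial ℝ) • A.map Polynomial.C)) j

/-- The Newton transformation
`T_k(A) = σ_k(A)·I − σ_{k−1}(A)·A + σ_{k−2}(A)·A² − ··· + (−1)^k·A^k`. -/
noncomputable def newtonT {m : ℕ} (A : Matrix (Fin m) (Fin m) ℝ) (k : ℕ) :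
    Matrix (Fin m) (Fin m) ℝ :=
  ∑ i ∈ Finset.range (k + 1), ((-1 : ℝ) ^ i * sigmaP A (k - i)) • A ^ i

/-- `sigmaMulti A lam` is the coefficient `σ_λ(A₁, …, A_k)` of `t₁^{λ₁}···t_k^{λ_k}` in
`det(I_m + t₁A₁ + ··· + t_kA_k)`. -/
noncomputable def sigmaMulti {m k : ℕ} (A : Fin k → Matrix (Fin m) (Fin m) ℝ)
    (lam : Fin k → ℕ) : ℝ :=
  MvPolynomial.coeff (Finsupp.equivFunOnFinite.symm lam)
    (Matrix.det ((1 : Matrix (Fin m) (Fin m) (MvPolynomial (Fin k) ℝ)) +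
      ∑ i, (MvPolynomial.X i : MvPolynomial (Fin k) ℝ) • (A i).map MvPolynomial.C))

open Matrix Polynomial

noncomputable def pmat {m : ℕ} (X : Matrix (Fin m) (Fin m) ℝ) :
    Matrix (Fin m) (Fin m) (Polynomial ℝ) :=
  1 + (Polynomial.X : Polynomial ℝ) • X.map Polynomial.C

lemma sigmaP_eq {m : ℕ} (X : Matrix (Fin m) (Fin m) ℝ) (j : ℕ) :
    sigmaP X j = ((pmat X).det).coeff j := rfl

noncomputable def adjC {m : ℕ} (X : Matrix (Fin m) (Fin m) ℝ) (j : ℕ) :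
    Matrix (Fin m) (Fin m) ℝ :=
  Matrix.of fun i l => ((pmat X).adjugate i l).coeff j

lemma pmat_map_eval {m : ℕ} (X : Matrix (Fin m) (Fin m) ℝ) (r : ℝ) :
    (Polynomial.evalRingHom r).mapMatrix (pmat X) = 1 + r • X := by
  ext i l
  simp [pmat, Matrix.one_apply, apply_ite (Polynomial.eval r)]
  ring

lemma sigmaP_zero {m : ℕ} (X : Matrix (Fin m) (Fin m) ℝ) : sigmaP X 0 = 1 := by
  rw [sigmaP_eq, Polynomial.coeff_zero_eq_eval_zero]
  have h := RingHom.map_det (Polynomial.evalRingHom (0:ℝ)) (pmat X)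
  simp only [Polynomial.coe_evalRingHom] at h
  rw [h, pmat_map_eval]
  simp

lemma newtonT_zero {m : ℕ} (X : Matrix (Fin m) (Fin m) ℝ) : newtonT X 0 = 1 := by
  simp [newtonT, sigmaP_zero]

lemma newtonT_succ {m : ℕ} (X : Matrix (Fin m) (Fin m) ℝ) (j : ℕ) :
    newtonT X (j+1) = sigmaP X (j+1) • (1 : Matrix (Fin m) (Fin m) ℝ) - X * newtonT X j := by
  rw [newtonT, Finset.sum_range_succ']
  simp only [pow_zero, Nat.sub_zero, one_mul, pow_succ]
  rw [newtonT, Finset.mul_sum]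
  rw [sub_eq_add_neg, add_comm]
  congr 1
  rw [← Finset.sum_neg_distrib]
  refine Finset.sum_congr rfl fun i hi => ?_
  have h' : j + 1 - (i + 1) = j - i := by omega
  rw [h']
  rw [Matrix.mul_smul, ← neg_smul, ← pow_succ', pow_succ]
  congr 1
  ring

lemma adjC_zero {m : ℕ} (X : Matrix (Fin m) (Fin m) ℝ) : adjC X 0 = 1 := by
  ext i l
  have h := RingHom.map_adjugate (Polynomial.evalRingHom (0:ℝ)) (pmat X)
  rw [pmat_map_eval] at h
  have h2 := congrArg (fun M => M i l) h
  simp only [RingHom.mapMatrix_apply, Matrix.map_apply, coe_evalRingHom] at h2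
  simp only [adjC, Matrix.of_apply, Polynomial.coeff_zero_eq_eval_zero]
  rw [h2]
  simp [Matrix.adjugate_one]

lemma adjC_succ {m : ℕ} (X : Matrix (Fin m) (Fin m) ℝ) (j : ℕ) :
    adjC X (j+1) = sigmaP X (j+1) • (1 : Matrix (Fin m) (Fin m) ℝ) - X * adjC X j := by
  ext i l
  have h := congrArg (fun M => Polynomial.coeff (M i l) (j+1)) (Matrix.mul_adjugate (pmat X))
  simp only [Matrix.mul_apply, Matrix.smul_apply, Matrix.one_apply, Matrix.add_apply,
    Matrix.map_apply, smul_eq_mul, Polynomial.finset_sum_coeff] at h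
  have key : ∀ b : Fin m, (pmat X i b * (pmat X).adjugate b l).coeff (j + 1)
      = (if i = b then ((pmat X).adjugate b l).coeff (j+1) else 0)
        + X i b * ((pmat X).adjugate b l).coeff j := by
    intro b
    rw [show pmat X i b = (if i = b then 1 else 0) + Polynomial.X * Polynomial.C (X i b) by
      simp [pmat, Matrix.one_apply, Matrix.add_apply]]
    rw [add_mul, Polynomial.coeff_add]
    congr 1
    · split <;> simp
    · rw [mul_assoc, Polynomial.coeff_X_mul, Polynomial.coeff_C_mul]
  simp only [key, Finset.sum_add_distrib, Finset.sum_ite_eq, Finset.mem_univ, if_true] at h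
  have h2 : ((pmat X).det * if i = l then (1:Polynomial ℝ) else 0).coeff (j+1)
      = sigmaP X (j+1) * (if i = l then 1 else 0) := by
    split <;> simp [sigmaP, pmat]
  rw [h2] at h
  simp only [adjC, Matrix.of_apply, Matrix.sub_apply, Matrix.smul_apply, Matrix.one_apply,
    Matrix.mul_apply, smul_eq_mul]
  rw [eq_sub_iff_add_eq]
  rw [← h]

lemma adjC_eq_newtonT {m : ℕ} (X : Matrix (Fin m) (Fin m) ℝ) (j : ℕ) :
    adjC X j = newtonT X j := by
  induction j with
  | zero => rw [adjC_zero, newtonT_zero]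
  | succ n ih => rw [adjC_succ, newtonT_succ, ih]

lemma rank_decomp {m : ℕ} (A : Matrix (Fin m) (Fin m) ℝ) (h : A.rank ≤ 1) :
    ∃ u v : Fin m → ℝ, A = Matrix.replicateCol Unit u * Matrix.replicateRow Unit v := by
  rw [Matrix.rank] at h
  obtain ⟨⟨u, hu⟩, hw⟩ := finrank_le_one_iff.mp h
  choose c hc using fun j => hw ⟨A *ᵥ Pi.single j 1, ⟨Pi.single j 1, rfl⟩⟩
  refine ⟨u, c, ?_⟩
  ext i j
  have h2 := congrArg (fun x => (x : Fin m → ℝ) i) (Subtype.ext_iff.mp (hc j))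
  simp [Matrix.mulVec_single_one] at h2
  simp [Matrix.replicateCol, Matrix.replicateRow, Matrix.mul_apply, ← h2]
  ring

lemma det_rank_one_lemma {m : ℕ} (M : Matrix (Fin m) (Fin m) ℝ) (hM : IsUnit M.det)
    (u v : Fin m → ℝ) :
    (M + Matrix.replicateCol Unit u * Matrix.replicateRow Unit v).det
      = M.det + Matrix.trace (M.adjugate * (Matrix.replicateCol Unit u * Matrix.replicateRow Unit v)) := by
  have hc : M.det * Ring.inverse M.det = 1 := Ring.mul_inverse_cancel _ hM
  rw [Matrix.det_add_replicateCol_mul_replicateRow hM]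
  have h1 : (1 + Matrix.replicateRow Unit v * M⁻¹ * Matrix.replicateCol Unit u).det
      = 1 + (Matrix.replicateRow Unit v * M⁻¹ * Matrix.replicateCol Unit u) () () := by
    rw [Matrix.det_unique]; simp [Matrix.one_apply]
  rw [h1, Matrix.inv_def]
  simp only [Matrix.mul_apply, Matrix.trace, Matrix.diag, Matrix.replicateCol, Matrix.replicateRow,
    Matrix.smul_apply, Pi.add_apply, Matrix.add_apply, Matrix.of_apply,
    Finset.univ_unique, Finset.sum_const, smul_eq_mul, Finset.card_singleton, one_smul,
    Finset.sum_mul, Finset.mul_sum]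
  rw [mul_add, mul_one]
  congr 1
  rw [Finset.sum_comm, Finset.mul_sum]
  refine Finset.sum_congr rfl fun i _ => ?_
  rw [Finset.mul_sum]
  refine Finset.sum_congr rfl fun x _ => ?_
  calc M.det * (v i * (Ring.inverse M.det * M.adjugate i x) * u x)
      = (M.det * Ring.inverse M.det) * (M.adjugate i x * (u x * v i)) := by ring
    _ = M.adjugate i x * (u x * v i) := by rw [hc, one_mul]

lemma detP_add_rank_one {m : ℕ} (X A : Matrix (Fin m) (Fin m) ℝ) (hA : A.rank ≤ 1) :
    (pmat (X + A)).det = (pmat X).det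
      + Polynomial.X * Matrix.trace ((pmat X).adjugate * A.map Polynomial.C) := by
  obtain ⟨u, v, rfl⟩ := rank_decomp A hA
  set B := Matrix.replicateCol Unit u * Matrix.replicateRow Unit v with hB
  apply Polynomial.eq_of_infinite_eval_eq
  have hne : (pmat X).det ≠ 0 := by
    intro h0
    have h1 : sigmaP X 0 = 0 := by rw [sigmaP_eq, h0]; simp
    rw [sigmaP_zero] at h1; exact one_ne_zero h1
  have hfin : {r : ℝ | ((pmat X).det).IsRoot r}.Finite :=
    Polynomial.finite_setOf_isRoot hne
  apply Set.Infinite.mono (s := {r : ℝ | ((pmat X).det).IsRoot r}ᶜ)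
  · intro r hr
    simp only [Set.mem_compl_iff, Set.mem_setOf_eq, Polynomial.IsRoot] at hr
    have er : ∀ (Y : Matrix (Fin m) (Fin m) ℝ), Polynomial.eval r (pmat Y).det
        = Matrix.det (1 + r • Y) := by
      intro Y
      rw [show Polynomial.eval r (pmat Y).det = (Polynomial.evalRingHom r) (pmat Y).det from rfl,
        RingHom.map_det, pmat_map_eval]
    have hMdet : IsUnit (Matrix.det (1 + r • X)) := by
      rw [← er]; exact isUnit_iff_ne_zero.mpr hr
    simp only [Set.mem_setOf_eq]
    rw [Polynomial.eval_add, Polynomial.eval_mul, Polynomial.eval_X, er, er]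
    have hcol : Matrix.replicateCol Unit (r • u) * Matrix.replicateRow Unit v = r • B := by
      ext i j
      simp [hB, Matrix.mul_apply, Matrix.replicateCol, Matrix.row]
      ring
    have hsplit : (1 : Matrix (Fin m) (Fin m) ℝ) + r • (X + B)
        = (1 + r • X) + Matrix.replicateCol Unit (r • u) * Matrix.replicateRow Unit v := by
      rw [smul_add, add_assoc, hcol]
    rw [hsplit, det_rank_one_lemma _ hMdet]
    congr 1
    rw [hcol, Matrix.mul_smul, Matrix.trace_smul]
    have hadj : (1 + r • X).adjugate
        = ((Polynomial.evalRingHom r).mapMatrix ((pmat X).adjugate)) := by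
      rw [RingHom.map_adjugate, pmat_map_eval]
    rw [hadj]
    have htr : Polynomial.eval r (Matrix.trace ((pmat X).adjugate * B.map Polynomial.C))
        = Matrix.trace ((Polynomial.evalRingHom r).mapMatrix ((pmat X).adjugate) * B) := by
      simp only [Matrix.trace, Matrix.diag, Matrix.mul_apply, RingHom.mapMatrix_apply,
        Matrix.map_apply, Polynomial.eval_finset_sum, Polynomial.eval_mul, Polynomial.eval_C,
        coe_evalRingHom]
    rw [htr]
    simp [smul_eq_mul]
  · exact Set.Infinite.mono (fun r hr => hr) (Set.Finite.infinite_compl hfin)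

lemma sigmaP_add_rank_one {m : ℕ} (X A : Matrix (Fin m) (Fin m) ℝ) (hA : A.rank ≤ 1)
    (k : ℕ) (hk : 1 ≤ k) :
    sigmaP (X + A) k = sigmaP X k + Matrix.trace (newtonT X (k-1) * A) := by
  obtain ⟨n, rfl⟩ : ∃ n, k = n + 1 := ⟨k - 1, by omega⟩
  rw [sigmaP_eq, detP_add_rank_one X A hA, Polynomial.coeff_add, Polynomial.coeff_X_mul]
  rw [← sigmaP_eq]
  congr 1
  simp only [Nat.add_sub_cancel]
  rw [← adjC_eq_newtonT]
  simp only [Matrix.trace, Matrix.diag, Matrix.mul_apply, Polynomial.finset_sum_coeff,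
    Matrix.map_apply, Polynomial.coeff_mul_C, adjC, Matrix.of_apply]


lemma filter_lt_castSucc {n : ℕ} {α : Type*} [AddCommMonoid α] (A : Fin (n+1) → α) (i : Fin n) :
    ∑ j ∈ Finset.univ.filter (fun j => j < i.castSucc), A j
      = ∑ j ∈ Finset.univ.filter (fun j => j < i), A j.castSucc := by
  rw [show Finset.univ.filter (fun j : Fin (n+1) => j < i.castSucc)
      = Finset.map ⟨Fin.castSucc, Fin.castSucc_injective n⟩
        (Finset.univ.filter (fun j : Fin n => j < i)) from ?_]
  · rw [Finset.sum_map]; rfl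
  · ext j
    simp only [Finset.mem_filter, Finset.mem_univ, true_and, Finset.mem_map,
      Function.Embedding.coeFn_mk, Fin.lt_def, Fin.coe_castSucc]
    constructor
    · intro hj
      have hj' : j.val < n := by omega
      exact ⟨⟨j.val, hj'⟩, by simpa using hj, by ext; simp⟩
    · rintro ⟨a, ha, rfl⟩
      simpa using ha

lemma filter_lt_last {n : ℕ} {α : Type*} [AddCommMonoid α] (A : Fin (n+1) → α) :
    ∑ j ∈ Finset.univ.filter (fun j => j < Fin.last n), A j = ∑ j : Fin n, A j.castSucc := by
  rw [show Finset.univ.filter (fun j : Fin (n+1) => j < Fin.last n)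
      = Finset.map ⟨Fin.castSucc, Fin.castSucc_injective n⟩ Finset.univ from ?_]
  · rw [Finset.sum_map]; rfl
  · ext j
    simp only [Finset.mem_filter, Finset.mem_univ, true_and, Finset.mem_map,
      Function.Embedding.coeFn_mk, Fin.lt_def, Fin.val_last, Fin.coe_castSucc]
    constructor
    · intro hj
      exact ⟨⟨j.val, hj⟩, by ext; simp⟩
    · rintro ⟨a, rfl⟩
      exact a.isLt

lemma aux_induction {m : ℕ} (k : ℕ) (hk : 1 ≤ k) :
    ∀ (s : ℕ) (X : Matrix (Fin m) (Fin m) ℝ) (A : Fin s → Matrix (Fin m) (Fin m) ℝ),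
      (∀ i, (A i).rank ≤ 1) →
      sigmaP (X + ∑ i, A i) k = sigmaP X k + ∑ i : Fin s, Matrix.trace
        (newtonT (X + ∑ j ∈ Finset.univ.filter (fun j => j < i), A j) (k-1) * A i) := by
  intro s
  induction s with
  | zero => intro X A hA; simp
  | succ n ih =>
    intro X A hA
    rw [Fin.sum_univ_castSucc, ← add_assoc,
      sigmaP_add_rank_one _ _ (hA _) k hk,
      ih X (fun i => A i.castSucc) (fun i => hA _), Fin.sum_univ_castSucc]
    have hlast : ∑ j ∈ Finset.univ.filter (fun j => j < Fin.last n), A j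
        = ∑ j : Fin n, A j.castSucc := filter_lt_last A
    have hcast : ∀ i : Fin n, (∑ j ∈ Finset.univ.filter (fun j => j < i.castSucc), A j)
        = ∑ j ∈ Finset.univ.filter (fun j => j < i), A j.castSucc :=
      fun i => filter_lt_castSucc A i
    simp only [hlast, hcast]
    rw [add_assoc]


lemma aeval_coeff_sum (k : ℕ) (p : MvPolynomial (Fin 2) ℝ) :
    (MvPolynomial.aeval (fun _ : Fin 2 => (Polynomial.X : Polynomial ℝ)) p).coeff k
      = ∑ j ∈ Finset.range (k+1),
          MvPolynomial.coeff (Finsupp.equivFunOnFinite.symm ![k - j, j]) p := by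
  induction p using MvPolynomial.induction_on' with
  | add p q hp hq => simp [map_add, Polynomial.coeff_add, hp, hq, MvPolynomial.coeff_add,
      Finset.sum_add_distrib]
  | monomial d a =>
    rw [MvPolynomial.aeval_monomial]
    rw [Finsupp.prod_fintype _ _ (fun i => pow_zero _)]
    rw [Fin.prod_univ_two]
    rw [← pow_add]
    simp only [MvPolynomial.coeff_monomial]
    rw [show (algebraMap ℝ (Polynomial ℝ)) a = Polynomial.C a from rfl]
    rw [Polynomial.coeff_C_mul, Polynomial.coeff_X_pow]
    by_cases h : d 0 + d 1 = k
    · rw [if_pos h.symm, mul_one]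
      rw [Finset.sum_eq_single (d 1)]
      · rw [if_pos]
        apply Finsupp.equivFunOnFinite.injective
        funext i
        fin_cases i <;> simp <;> omega
      · intro j hj hne
        rw [if_neg]
        intro hd
        apply hne
        have := congrArg (fun f => Finsupp.equivFunOnFinite f 1) hd
        exact (by simpa using this : d 1 = j).symm
      · intro h'; exact absurd (Finset.mem_range.mpr (by omega)) h'
    · rw [if_neg (fun hh => h hh.symm), mul_zero]
      symm
      apply Finset.sum_eq_zero
      intro j hj
      rw [if_neg]
      intro hd
      apply h
      have h0 := congrArg (fun f => Finsupp.equivFunOnFinite f 0) hd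
      have h1 := congrArg (fun f => Finsupp.equivFunOnFinite f 1) hd
      simp at h0 h1
      have hjk := Finset.mem_range.mp hj
      rw [h0, h1]
      omega


lemma aeval_coeff_first (k : ℕ) (p : MvPolynomial (Fin 2) ℝ) :
    (MvPolynomial.aeval (fun i : Fin 2 => if i = 0 then (Polynomial.X : Polynomial ℝ) else 0)
        p).coeff k
      = MvPolynomial.coeff (Finsupp.equivFunOnFinite.symm ![k, 0]) p := by
  induction p using MvPolynomial.induction_on' with
  | add p q hp hq => simp [map_add, Polynomial.coeff_add, hp, hq, MvPolynomial.coeff_add]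
  | monomial d a =>
    rw [MvPolynomial.aeval_monomial]
    rw [Finsupp.prod_fintype _ _ (fun i => pow_zero _)]
    rw [Fin.prod_univ_two]
    simp only [if_pos rfl, if_neg (by decide : ¬(1 : Fin 2) = 0), if_true]
    rw [show (algebraMap ℝ (Polynomial ℝ)) a = Polynomial.C a from rfl]
    simp only [MvPolynomial.coeff_monomial]
    by_cases h1 : d 1 = 0
    · rw [h1, pow_zero, mul_one, Polynomial.coeff_C_mul, Polynomial.coeff_X_pow]
      by_cases h0 : d 0 = k
      · rw [if_pos (by rw [h0]), if_pos, mul_one]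
        apply Finsupp.equivFunOnFinite.injective
        funext i
        fin_cases i <;> simp [h0, h1]
      · rw [if_neg (fun hh => h0 hh.symm), if_neg, mul_zero]
        intro hd
        apply h0
        have := congrArg (fun f => Finsupp.equivFunOnFinite f 0) hd
        simpa using this
    · simp only [zero_pow h1, mul_zero, Polynomial.coeff_zero]
      rw [if_neg]
      intro hd
      apply h1
      have := congrArg (fun f => Finsupp.equivFunOnFinite f 1) hd
      simpa using this

noncomputable def qmat {m : ℕ} (C D : Matrix (Fin m) (Fin m) ℝ) :
    Matrix (Fin m) (Fin m) (MvPolynomial (Fin 2) ℝ) :=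
  (1 : Matrix (Fin m) (Fin m) (MvPolynomial (Fin 2) ℝ)) +
      ∑ i, (MvPolynomial.X i : MvPolynomial (Fin 2) ℝ) • (![C, D] i).map MvPolynomial.C

lemma qmat_map_sum {m : ℕ} (C D : Matrix (Fin m) (Fin m) ℝ) :
    (MvPolynomial.aeval (fun _ : Fin 2 => (Polynomial.X : Polynomial ℝ))).toRingHom.mapMatrix
      (qmat C D) = pmat (C + D) := by
  ext i l
  simp only [qmat, pmat, RingHom.mapMatrix_apply, Matrix.map_apply, Matrix.add_apply,
    Matrix.smul_apply, Fin.sum_univ_two, Matrix.cons_val_zero, Matrix.cons_val_one,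
    Matrix.head_cons, map_add, smul_eq_mul, _root_.map_mul, AlgHom.toRingHom_eq_coe,
    RingHom.coe_coe, MvPolynomial.aeval_X, MvPolynomial.aeval_C]
  rw [show (MvPolynomial.aeval (fun _ : Fin 2 => (Polynomial.X : Polynomial ℝ)))
      ((1 : Matrix (Fin m) (Fin m) (MvPolynomial (Fin 2) ℝ)) i l)
      = (1 : Matrix (Fin m) (Fin m) (Polynomial ℝ)) i l from by
    by_cases h : i = l <;> simp [Matrix.one_apply, h]]
  rw [Polynomial.algebraMap_eq, mul_add]

lemma qmat_map_first {m : ℕ} (C D : Matrix (Fin m) (Fin m) ℝ) :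
    (MvPolynomial.aeval (fun i : Fin 2 => if i = 0 then (Polynomial.X : Polynomial ℝ)
      else 0)).toRingHom.mapMatrix (qmat C D) = pmat C := by
  ext i l
  simp only [qmat, pmat, RingHom.mapMatrix_apply, Matrix.map_apply, Matrix.add_apply,
    Matrix.smul_apply, Fin.sum_univ_two, Matrix.cons_val_zero, Matrix.cons_val_one,
    Matrix.head_cons, map_add, smul_eq_mul, _root_.map_mul, AlgHom.toRingHom_eq_coe,
    RingHom.coe_coe, MvPolynomial.aeval_X, MvPolynomial.aeval_C]
  rw [show (MvPolynomial.aeval (fun i : Fin 2 => if i = 0 then (Polynomial.X : Polynomial ℝ)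
      else 0)) ((1 : Matrix (Fin m) (Fin m) (MvPolynomial (Fin 2) ℝ)) i l)
      = (1 : Matrix (Fin m) (Fin m) (Polynomial ℝ)) i l from by
    by_cases h : i = l <;> simp [Matrix.one_apply, h]]
  rw [Polynomial.algebraMap_eq]
  simp

lemma sigmaP_pair {m : ℕ} (C D : Matrix (Fin m) (Fin m) ℝ) (k : ℕ) :
    sigmaP (C + D) k = ∑ j ∈ Finset.range (k+1), sigmaMulti ![C, D] ![k - j, j] := by
  have h := RingHom.map_det
    (MvPolynomial.aeval (fun _ : Fin 2 => (Polynomial.X : Polynomial ℝ))).toRingHom (qmat C D)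
  rw [qmat_map_sum] at h
  have h2 : sigmaP (C + D) k = ((pmat (C+D)).det).coeff k := rfl
  rw [h2, ← h]
  rw [show ((MvPolynomial.aeval (fun _ : Fin 2 => (Polynomial.X : Polynomial ℝ))).toRingHom
    ((qmat C D).det)) = (MvPolynomial.aeval (fun _ : Fin 2 => (Polynomial.X : Polynomial ℝ)))
    ((qmat C D).det) from rfl]
  rw [aeval_coeff_sum]
  rfl

lemma sigmaMulti_first {m : ℕ} (C D : Matrix (Fin m) (Fin m) ℝ) (k : ℕ) :
    sigmaMulti ![C, D] ![k, 0] = sigmaP C k := by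
  have h := RingHom.map_det
    (MvPolynomial.aeval (fun i : Fin 2 => if i = 0 then (Polynomial.X : Polynomial ℝ)
      else 0)).toRingHom (qmat C D)
  rw [qmat_map_first] at h
  have h2 : sigmaP C k = ((pmat C).det).coeff k := rfl
  rw [h2, ← h, show ((MvPolynomial.aeval (fun i : Fin 2 => if i = 0 then
      (Polynomial.X : Polynomial ℝ) else 0)).toRingHom ((qmat C D).det))
      = (MvPolynomial.aeval (fun i : Fin 2 => if i = 0 then (Polynomial.X : Polynomial ℝ)
      else 0)) ((qmat C D).det) from rfl, aeval_coeff_first]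
  rfl

theorem stmt5 {m s : ℕ} (C D : Matrix (Fin m) (Fin m) ℝ)
    (A : Fin s → Matrix (Fin m) (Fin m) ℝ) (hA : ∀ i, (A i).rank ≤ 1)
    (k : ℕ) (hk1 : 1 ≤ k) (hkm : k ≤ m) :
    sigmaP (C + D + ∑ i, A i) k =
      sigmaP C k + (∑ j ∈ Finset.Icc 1 k, sigmaMulti ![C, D] ![k - j, j]) +
      ∑ i : Fin s, Matrix.trace
        (newtonT (C + D + ∑ j ∈ Finset.univ.filter (fun j => j < i), A j) (k - 1) * A i) := by
  have h1 := aux_induction k hk1 s (C + D) A hA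
  rw [h1, sigmaP_pair C D k]
  have hsplit : Finset.range (k+1) = insert 0 (Finset.Icc 1 k) := by
    ext x; simp; omega
  rw [hsplit, Finset.sum_insert (by simp)]
  rw [show (![k - 0, 0] : Fin 2 → ℕ) = ![k, 0] from by norm_num]
  rw [sigmaMulti_first]
end

section
/- Let (B_i)_{i≥0} be a sequence of real m×m matrices with B₀ = I_m, and let B(X) be the m×m matrix over the ring of formal power series ℝ⟦X⟧ whose (a,b) entry is Σ_{i≥0} (B_i)_{ab}·X^i. Then the constant coefficient of det(B(X)) is 1, and for every k ≥ 1 the coefficient of X^k in det(B(X)) equals Σ_{λ} σ_λ(B₁, …, B_k), where the sum is over all k-tuples λ = (λ₁, …, λ_k) of nonnegative integers with ‖λ‖ := λ₁ + 2λ₂ + ··· + kλ_k = k. -/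
open PowerSeries MvPolynomial in
theorem coeff_aeval_pow {k : ℕ} (n : ℕ) (p : MvPolynomial (Fin k) ℝ) :
    PowerSeries.coeff n (MvPolynomial.aeval (fun i : Fin k => (PowerSeries.X : ℝ⟦X⟧)^((i:ℕ)+1)) p)
    = ∑ d ∈ p.support.filter (fun d => ∑ i : Fin k, ((i:ℕ)+1) * d i = n), MvPolynomial.coeff d p := by
  conv_lhs => rw [p.as_sum, map_sum, map_sum]
  rw [Finset.sum_filter]
  apply Finset.sum_congr rfl
  intro d _
  rw [MvPolynomial.aeval_monomial, Finsupp.prod_fintype _ _ (fun i => pow_zero _)]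
  simp only [← pow_mul, Finset.prod_pow_eq_pow_sum]
  rw [← Algebra.smul_def, map_smul]
  simp only [PowerSeries.coeff_X_pow, smul_eq_mul, mul_ite, mul_one, mul_zero]
  congr 1
  simp [eq_comm, mul_comm]

theorem stmt6 {m : ℕ} (B : ℕ → Matrix (Fin m) (Fin m) ℝ) (hB0 : B 0 = 1) :
    (PowerSeries.coeff 0
        (Matrix.det (Matrix.of fun a b => PowerSeries.mk fun i => B i a b)) = 1) ∧
    ∀ k : ℕ, 1 ≤ k →
      PowerSeries.coeff k
          (Matrix.det (Matrix.of fun a b => PowerSeries.mk fun i => B i a b)) =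
        ∑ lam ∈ (Fintype.piFinset fun _ : Fin k => Finset.range (k + 1)).filter
            (fun lam : Fin k → ℕ => ∑ i : Fin k, ((i : ℕ) + 1) * lam i = k),
          sigmaMulti (fun i : Fin k => B ((i : ℕ) + 1)) lam := by
  set M : Matrix (Fin m) (Fin m) (PowerSeries ℝ) :=
    Matrix.of fun a b => PowerSeries.mk fun i => B i a b with hM
  constructor
  · rw [PowerSeries.coeff_zero_eq_constantCoeff, RingHom.map_det]
    have : (PowerSeries.constantCoeff (R := ℝ)).mapMatrix M = 1 := by
      ext a b
      simp [hM, hB0, Matrix.one_apply]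
    rw [this, Matrix.det_one]
  · intro k hk
    set A : Fin k → Matrix (Fin m) (Fin m) ℝ := fun i => B ((i : ℕ) + 1) with hA
    set φ : MvPolynomial (Fin k) ℝ →ₐ[ℝ] (PowerSeries ℝ) :=
      MvPolynomial.aeval (fun i : Fin k => (PowerSeries.X : (PowerSeries ℝ))^((i:ℕ)+1)) with hφ
    set P : Matrix (Fin m) (Fin m) (MvPolynomial (Fin k) ℝ) :=
      (1 : Matrix (Fin m) (Fin m) (MvPolynomial (Fin k) ℝ)) +
        ∑ i, (MvPolynomial.X i : MvPolynomial (Fin k) ℝ) • (A i).map MvPolynomial.C with hP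
    set N : Matrix (Fin m) (Fin m) (PowerSeries ℝ) := φ.toRingHom.mapMatrix P with hN
    -- coefficients of entries agree up to degree k
    have hentry : ∀ a b j, j < k + 1 →
        PowerSeries.coeff j (M a b) = PowerSeries.coeff j (N a b) := by
      intro a b j hj
      have hMab : PowerSeries.coeff j (M a b) = B j a b := by
        simp [hM]
      have hNab : N a b = (if a = b then (1:(PowerSeries ℝ)) else 0) +
          ∑ i : Fin k, (algebraMap ℝ (PowerSeries ℝ) (A i a b)) * (PowerSeries.X)^((i:ℕ)+1) := by
        simp only [hN, hP, RingHom.mapMatrix_apply, Matrix.map_apply, Matrix.add_apply,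
          Matrix.one_apply, Matrix.sum_apply, Matrix.smul_apply, smul_eq_mul,
          map_add, map_sum, map_mul, apply_ite φ, map_one, map_zero]
        congr 1
        apply Finset.sum_congr rfl
        intro i _
        simp only [AlgHom.toRingHom_eq_coe, RingHom.coe_coe, hφ, MvPolynomial.aeval_X,
          MvPolynomial.aeval_C]
        exact mul_comm _ _
      rw [hMab, hNab, map_add, map_sum]
      have hsum : ∀ i : Fin k,
          PowerSeries.coeff j ((algebraMap ℝ (PowerSeries ℝ) (A i a b)) * (PowerSeries.X)^((i:ℕ)+1))
          = if j = (i:ℕ)+1 then A i a b else 0 := by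
        intro i
        rw [← Algebra.smul_def, map_smul, PowerSeries.coeff_X_pow]
        simp
      simp only [hsum]
      rcases j with _ | t
      · simp [hB0, Matrix.one_apply, apply_ite (PowerSeries.coeff 0)]
      · have ht : t < k := by omega
        have hcond : ∀ i : Fin k, (t + 1 = (i:ℕ) + 1) ↔ i = ⟨t, ht⟩ := by
          intro i
          constructor
          · intro h
            apply Fin.ext
            show (i:ℕ) = t
            omega
          · intro h; subst h; rfl
        have : ∑ i : Fin k, (if t + 1 = (i:ℕ)+1 then A i a b else 0)
            = ∑ i : Fin k, (if i = ⟨t, ht⟩ then A i a b else 0) := by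
          apply Finset.sum_congr rfl
          intro i _
          exact if_congr (hcond i) rfl rfl
        rw [this, Finset.sum_ite_eq' Finset.univ (⟨t, ht⟩ : Fin k)]
        simp [apply_ite (PowerSeries.coeff (t+1)), hA]
    -- determinants agree in degree k
    have hdet : PowerSeries.coeff k M.det = PowerSeries.coeff k N.det := by
      have hdvd : (PowerSeries.X : (PowerSeries ℝ))^(k+1) ∣ (M.det - N.det) := by
        rw [← Ideal.mem_span_singleton, ← Ideal.Quotient.eq]
        rw [RingHom.map_det, RingHom.map_det]
        congr 1
        ext a b
        simp only [RingHom.mapMatrix_apply, Matrix.map_apply]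
        rw [Ideal.Quotient.eq, Ideal.mem_span_singleton, PowerSeries.X_pow_dvd_iff]
        intro j hj
        rw [map_sub, sub_eq_zero]
        exact hentry a b j hj
      rw [PowerSeries.X_pow_dvd_iff] at hdvd
      have := hdvd k (by omega)
      rw [map_sub, sub_eq_zero] at this
      exact this
    rw [hdet, hN]
    rw [← RingHom.map_det]
    rw [show φ.toRingHom P.det = MvPolynomial.aeval
      (fun i : Fin k => (PowerSeries.X : (PowerSeries ℝ))^((i:ℕ)+1)) P.det from rfl]
    rw [coeff_aeval_pow]
    -- now the finset manipulation
    have hsm : ∀ lam : Fin k → ℕ, sigmaMulti A lam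
        = MvPolynomial.coeff (Finsupp.equivFunOnFinite.symm lam) P.det := fun _ => rfl
    simp only [hsm]
    have hinj : ∀ x ∈ (Fintype.piFinset fun _ : Fin k => Finset.range (k + 1)).filter
        (fun lam : Fin k → ℕ => ∑ i : Fin k, ((i : ℕ) + 1) * lam i = k),
        ∀ y ∈ (Fintype.piFinset fun _ : Fin k => Finset.range (k + 1)).filter
        (fun lam : Fin k → ℕ => ∑ i : Fin k, ((i : ℕ) + 1) * lam i = k),
        Finsupp.equivFunOnFinite.symm x = Finsupp.equivFunOnFinite.symm y → x = y :=
      fun x _ y _ h => Finsupp.equivFunOnFinite.symm.injective h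
    have himg : ∑ d ∈ ((Fintype.piFinset fun _ : Fin k => Finset.range (k + 1)).filter
          (fun lam : Fin k → ℕ => ∑ i : Fin k, ((i : ℕ) + 1) * lam i = k)).image
          (fun lam : Fin k → ℕ => Finsupp.equivFunOnFinite.symm lam),
          MvPolynomial.coeff d P.det
        = ∑ lam ∈ (Fintype.piFinset fun _ : Fin k => Finset.range (k + 1)).filter
          (fun lam : Fin k → ℕ => ∑ i : Fin k, ((i : ℕ) + 1) * lam i = k),
          MvPolynomial.coeff (Finsupp.equivFunOnFinite.symm lam) P.det :=
      Finset.sum_image hinj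
    rw [← himg]
    apply Finset.sum_subset
    · intro d hd
      simp only [Finset.mem_filter, MvPolynomial.mem_support_iff] at hd
      rw [Finset.mem_image]
      refine ⟨Finsupp.equivFunOnFinite d, ?_, by simp⟩
      rw [Finset.mem_filter]
      constructor
      · rw [Fintype.mem_piFinset]
        intro i
        rw [Finset.mem_range]
        have heq : (Finsupp.equivFunOnFinite d) i = d i := rfl
        have h1 : ((i:ℕ)+1) * d i ≤ k :=
          le_of_le_of_eq (Finset.single_le_sum (f := fun i : Fin k => ((i:ℕ)+1) * d i)
            (fun _ _ => Nat.zero_le _) (Finset.mem_univ i)) hd.2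
        have h2 : d i ≤ ((i:ℕ)+1) * d i := Nat.le_mul_of_pos_left _ (Nat.succ_pos _)
        omega
      · simpa using hd.2
    · intro d hd hnd
      rw [Finset.mem_image] at hd
      obtain ⟨lam, hlam, rfl⟩ := hd
      rw [Finset.mem_filter] at hlam
      by_contra hne
      apply hnd
      rw [Finset.mem_filter, MvPolynomial.mem_support_iff]
      refine ⟨hne, ?_⟩
      simpa using hlam.2
end

section
/- For arbitrary real m×m matrices B and C and integers k, l > 0, σ_{(k,l)}(B, C) = σ_k(B)·σ_l(C) − Σ_{i=1}^{min(k,l)} σ_{(k−i, l−i, i)}(B, C, BC). -/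
open MvPolynomial Finset


lemma eqF2 (a b : ℕ) (d : Fin 2 →₀ ℕ) :
    Finsupp.equivFunOnFinite.symm ![a, b] = d ↔ (a = d 0 ∧ b = d 1) := by
  rw [Equiv.symm_apply_eq]
  simp [funext_iff, Fin.forall_fin_two, eq_comm]

lemma eqF3 (a b c : ℕ) (d : Fin 3 →₀ ℕ) :
    Finsupp.equivFunOnFinite.symm ![a, b, c] = d ↔ (a = d 0 ∧ b = d 1 ∧ c = d 2) := by
  rw [Equiv.symm_apply_eq]
  simp [funext_iff, Fin.forall_fin_succ, eq_comm]

lemma vec2 (a b : ℕ) : (Finsupp.equivFunOnFinite.symm ![a, b] : Fin 2 →₀ ℕ) =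
    Finsupp.single 0 a + Finsupp.single 1 b := by
  ext j; fin_cases j <;> simp [Finsupp.equivFunOnFinite] <;> rfl

lemma mono2 (a b : ℕ) (c : ℝ) :
    MvPolynomial.C c * (X (0 : Fin 2) : MvPolynomial (Fin 2) ℝ) ^ a * (X 1) ^ b =
      monomial (Finsupp.equivFunOnFinite.symm ![a, b]) c := by
  rw [vec2, X_pow_eq_monomial, X_pow_eq_monomial, C_mul_monomial, monomial_mul]
  ring_nf

lemma aeval3_monomial (d : Fin 3 →₀ ℕ) (c : ℝ) :
    aeval ![(X 0 : MvPolynomial (Fin 2) ℝ), X 1, X 0 * X 1] (monomial d c) =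
      monomial (Finsupp.equivFunOnFinite.symm ![d 0 + d 2, d 1 + d 2]) c := by
  rw [aeval_monomial, Finsupp.prod_fintype]
  · rw [Fin.prod_univ_three]
    simp only [Matrix.cons_val_zero, Matrix.cons_val_one, Matrix.head_cons,
      Matrix.cons_val_two, Matrix.tail_cons, MvPolynomial.algebraMap_eq]
    rw [← mono2, mul_pow, pow_add, pow_add]
    ring
  · intro i; exact pow_zero _

lemma aeval0_monomial (d : Fin 3 →₀ ℕ) (c : ℝ) :
    aeval ![(X 0 : MvPolynomial (Fin 2) ℝ), X 1, 0] (monomial d c) =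
      if d 2 = 0 then monomial (Finsupp.equivFunOnFinite.symm ![d 0, d 1]) c else 0 := by
  rw [aeval_monomial, Finsupp.prod_fintype]
  · rw [Fin.prod_univ_three]
    simp only [Matrix.cons_val_zero, Matrix.cons_val_one, Matrix.head_cons,
      Matrix.cons_val_two, Matrix.tail_cons, MvPolynomial.algebraMap_eq]
    rcases Nat.eq_zero_or_pos (d 2) with h | h
    · rw [h, if_pos rfl, pow_zero, mul_one, ← mono2]; ring
    · rw [if_neg h.ne', zero_pow h.ne']; ring
  · intro i; exact pow_zero _

lemma symm2_inj (a b a' b' : ℕ) :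
    (Finsupp.equivFunOnFinite.symm ![a, b] : Fin 2 →₀ ℕ) =
      Finsupp.equivFunOnFinite.symm ![a', b'] ↔ (a = a' ∧ b = b') := by
  rw [Equiv.symm_apply_eq, Equiv.apply_symm_apply]
  simp [funext_iff, Fin.forall_fin_two]

lemma sum_support_ite (q : MvPolynomial (Fin 3) ℝ) (t : Fin 3 →₀ ℕ) :
    ∑ d ∈ q.support, (if t = d then coeff d q else 0) = coeff t q := by
  rw [Finset.sum_ite_eq]
  split_ifs with h
  · rfl
  · exact (MvPolynomial.notMem_support_iff.mp h).symm

lemma coeff_subst (q : MvPolynomial (Fin 3) ℝ) (k l : ℕ) :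
    coeff (Finsupp.equivFunOnFinite.symm ![k, l])
        (aeval ![(X 0 : MvPolynomial (Fin 2) ℝ), X 1, X 0 * X 1] q) =
      ∑ i ∈ range (min k l + 1),
        coeff (Finsupp.equivFunOnFinite.symm ![k - i, l - i, i]) q := by
  conv_lhs => rw [← support_sum_monomial_coeff q]
  rw [map_sum, MvPolynomial.coeff_sum]
  have hrhs : ∀ i, coeff (Finsupp.equivFunOnFinite.symm ![k - i, l - i, i]) q =
      ∑ d ∈ q.support,
        (if (Finsupp.equivFunOnFinite.symm ![k - i, l - i, i] : Fin 3 →₀ ℕ) = d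
          then coeff d q else 0) := fun i => (sum_support_ite q _).symm
  simp_rw [hrhs]
  rw [Finset.sum_comm]
  apply Finset.sum_congr rfl
  intro d _
  rw [aeval3_monomial, MvPolynomial.coeff_monomial]
  simp only [symm2_inj, eqF3]
  by_cases h : d 0 + d 2 = k ∧ d 1 + d 2 = l
  · rw [if_pos h]
    rw [Finset.sum_eq_single (d 2)]
    · rw [if_pos ⟨by omega, by omega, rfl⟩]
    · intro i _ hne
      rw [if_neg]
      rintro ⟨-, -, h3⟩
      exact hne h3
    · intro hmem
      exact absurd (Finset.mem_range.mpr (by omega)) hmem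
  · rw [if_neg h]
    refine (Finset.sum_eq_zero ?_).symm
    intro i hi
    rw [if_neg]
    rintro ⟨h0, h1, h2⟩
    rw [Finset.mem_range] at hi
    exact h ⟨by omega, by omega⟩

lemma coeff_subst0 (q : MvPolynomial (Fin 3) ℝ) (k l : ℕ) :
    coeff (Finsupp.equivFunOnFinite.symm ![k, l])
        (aeval ![(X 0 : MvPolynomial (Fin 2) ℝ), X 1, 0] q) =
      coeff (Finsupp.equivFunOnFinite.symm ![k, l, 0]) q := by
  conv_lhs => rw [← support_sum_monomial_coeff q]
  rw [map_sum, MvPolynomial.coeff_sum, ← sum_support_ite q]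
  apply Finset.sum_congr rfl
  intro d _
  rw [aeval0_monomial]
  by_cases h2 : d 2 = 0
  · rw [if_pos h2, MvPolynomial.coeff_monomial]
    simp only [symm2_inj, eqF3]
    by_cases h : d 0 = k ∧ d 1 = l
    · rw [if_pos ⟨h.1, h.2⟩, if_pos ⟨h.1.symm, h.2.symm, h2.symm⟩]
    · rw [if_neg, if_neg]
      · rintro ⟨a, b, -⟩; exact h ⟨a.symm, b.symm⟩
      · rintro ⟨a, b⟩; exact h ⟨a, b⟩
  · rw [if_neg h2, MvPolynomial.coeff_zero, if_neg]
    simp only [eqF3]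
    rintro ⟨-, -, h3⟩
    exact h2 h3.symm

lemma sum_support_ite_P (p : Polynomial ℝ) (t : ℕ) (g : ℕ → ℝ) :
    ∑ a ∈ p.support, (if a = t then p.coeff a * g a else 0) = p.coeff t * g t := by
  rw [Finset.sum_ite_eq']
  split_ifs with h
  · rfl
  · rw [Polynomial.notMem_support_iff.mp h, zero_mul]

lemma prod_coeff (p q : Polynomial ℝ) (k l : ℕ) :
    coeff (Finsupp.equivFunOnFinite.symm ![k, l])
        ((Polynomial.aeval (X 0 : MvPolynomial (Fin 2) ℝ) p) *
          (Polynomial.aeval (X 1 : MvPolynomial (Fin 2) ℝ) q)) =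
      p.coeff k * q.coeff l := by
  conv_lhs => rw [p.as_sum_support, q.as_sum_support]
  rw [map_sum, map_sum, Finset.sum_mul_sum, MvPolynomial.coeff_sum]
  simp_rw [MvPolynomial.coeff_sum]
  have hterm : ∀ a b : ℕ,
      (Polynomial.aeval (X 0 : MvPolynomial (Fin 2) ℝ) (Polynomial.monomial a (p.coeff a))) *
        (Polynomial.aeval (X 1 : MvPolynomial (Fin 2) ℝ) (Polynomial.monomial b (q.coeff b))) =
      monomial (Finsupp.equivFunOnFinite.symm ![a, b]) (p.coeff a * q.coeff b) := by
    intro a b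
    rw [Polynomial.aeval_monomial, Polynomial.aeval_monomial, ← mono2, C_mul]
    simp only [MvPolynomial.algebraMap_eq]
    ring
  simp_rw [hterm, MvPolynomial.coeff_monomial, symm2_inj, ite_and]
  rw [← sum_support_ite_P p k (fun _ => q.coeff l)]
  apply Finset.sum_congr rfl
  intro a _
  by_cases ha : a = k
  · simp only [ha, eq_self_iff_true, if_true]
    rw [Finset.sum_ite_eq']
    split_ifs with h
    · rfl
    · rw [Polynomial.notMem_support_iff.mp h, mul_zero]
  · simp [ha]

-- mapping the 1-variable det into two variables
lemma key1 {m : ℕ} (j : Fin 2) (A : Matrix (Fin m) (Fin m) ℝ) :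
    Polynomial.aeval (X j : MvPolynomial (Fin 2) ℝ)
      (Matrix.det ((1 : Matrix (Fin m) (Fin m) (Polynomial ℝ)) +
        (Polynomial.X : Polynomial ℝ) • A.map Polynomial.C)) =
    Matrix.det ((1 : Matrix (Fin m) (Fin m) (MvPolynomial (Fin 2) ℝ)) +
      (X j : MvPolynomial (Fin 2) ℝ) • A.map MvPolynomial.C) := by
  rw [show (Polynomial.aeval (X j : MvPolynomial (Fin 2) ℝ) :
      Polynomial ℝ → MvPolynomial (Fin 2) ℝ) =
    ⇑(Polynomial.aeval (X j : MvPolynomial (Fin 2) ℝ)).toRingHom from rfl,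
    RingHom.map_det]
  congr 1
  refine Matrix.ext fun i j' => ?_
  simp only [RingHom.mapMatrix_apply, AlgHom.toRingHom_eq_coe, RingHom.coe_coe, AlgHom.coe_toRingHom, Matrix.map_apply, Matrix.add_apply, Matrix.one_apply, Matrix.smul_apply,
    smul_eq_mul, apply_ite, map_add, map_mul, Polynomial.aeval_X, Polynomial.aeval_C,
    MvPolynomial.algebraMap_eq, map_one, map_zero]

-- the 3-variable matrix, mapped by an aeval
lemma key3 {m : ℕ} (B C : Matrix (Fin m) (Fin m) ℝ)
    (f : Fin 3 → MvPolynomial (Fin 2) ℝ) :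
    MvPolynomial.aeval f
      (Matrix.det ((1 : Matrix (Fin m) (Fin m) (MvPolynomial (Fin 3) ℝ)) +
        ∑ i, (MvPolynomial.X i : MvPolynomial (Fin 3) ℝ) • (![B, C, B * C] i).map MvPolynomial.C)) =
    Matrix.det ((1 : Matrix (Fin m) (Fin m) (MvPolynomial (Fin 2) ℝ)) +
      f 0 • B.map MvPolynomial.C + f 1 • C.map MvPolynomial.C +
      f 2 • (B * C).map MvPolynomial.C) := by
  rw [show (MvPolynomial.aeval f :
      MvPolynomial (Fin 3) ℝ → MvPolynomial (Fin 2) ℝ) =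
    ⇑(MvPolynomial.aeval f).toRingHom from rfl,
    RingHom.map_det]
  congr 1
  refine Matrix.ext fun i j' => ?_
  rw [Fin.sum_univ_three]
  simp [RingHom.mapMatrix_apply, AlgHom.toRingHom_eq_coe, RingHom.coe_coe, AlgHom.coe_toRingHom, Matrix.map_apply, Matrix.add_apply, Matrix.one_apply,
    Matrix.smul_apply, smul_eq_mul, apply_ite, add_assoc, Matrix.mul_apply, map_sum, map_mul]

lemma hmat {m : ℕ} (B C : Matrix (Fin m) (Fin m) ℝ) :
    ((1 : Matrix (Fin m) (Fin m) (MvPolynomial (Fin 2) ℝ)) +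
        (X 0 : MvPolynomial (Fin 2) ℝ) • B.map MvPolynomial.C) *
      (1 + (X 1 : MvPolynomial (Fin 2) ℝ) • C.map MvPolynomial.C) =
    1 + (X 0 : MvPolynomial (Fin 2) ℝ) • B.map MvPolynomial.C +
      (X 1 : MvPolynomial (Fin 2) ℝ) • C.map MvPolynomial.C +
      ((X 0 : MvPolynomial (Fin 2) ℝ) * X 1) • (B * C).map MvPolynomial.C := by
  have hmul : (B * C).map (MvPolynomial.C : ℝ →+* MvPolynomial (Fin 2) ℝ) =
      B.map MvPolynomial.C * C.map MvPolynomial.C := Matrix.map_mul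
  rw [mul_add, add_mul, add_mul, smul_mul_smul_comm, hmul]
  simp only [one_mul, mul_one]
  abel

theorem stmt7 {m : ℕ} (B C : Matrix (Fin m) (Fin m) ℝ) (k l : ℕ) (hk : 0 < k) (hl : 0 < l) :
    sigmaMulti ![B, C] ![k, l] =
      sigmaP B k * sigmaP C l -
        ∑ i ∈ Finset.Icc 1 (min k l), sigmaMulti ![B, C, B * C] ![k - i, l - i, i] := by
  have hM2 : (1 : Matrix (Fin m) (Fin m) (MvPolynomial (Fin 2) ℝ)) +
      ∑ i, (X i : MvPolynomial (Fin 2) ℝ) • ((![B, C] : Fin 2 → _) i).map MvPolynomial.C =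
      1 + (X 0 : MvPolynomial (Fin 2) ℝ) • B.map MvPolynomial.C +
        (X 1 : MvPolynomial (Fin 2) ℝ) • C.map MvPolynomial.C := by
    rw [Fin.sum_univ_two]
    simp [add_assoc]
  have e1 : sigmaP B k * sigmaP C l =
      ∑ i ∈ range (min k l + 1), sigmaMulti ![B, C, B * C] ![k - i, l - i, i] := by
    unfold sigmaP
    rw [← prod_coeff, key1 0 B, key1 1 C, ← Matrix.det_mul, hmat B C]
    have h3 := key3 B C ![X 0, X 1, X 0 * X 1]
    simp only [Matrix.cons_val_zero, Matrix.cons_val_one, Matrix.head_cons,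
      Matrix.cons_val_two, Matrix.tail_cons] at h3
    rw [← h3, coeff_subst]
    rfl
  have e2 : sigmaMulti ![B, C] ![k, l] = sigmaMulti ![B, C, B * C] ![k, l, 0] := by
    unfold sigmaMulti
    have h0 := key3 B C ![X 0, X 1, 0]
    simp only [Matrix.cons_val_zero, Matrix.cons_val_one, Matrix.head_cons,
      Matrix.cons_val_two, Matrix.tail_cons, zero_smul, add_zero] at h0
    rw [hM2, ← h0, coeff_subst0]
  rw [Finset.sum_range_succ'] at e1
  simp only [Nat.sub_zero] at e1
  have e3 : ∑ i ∈ Finset.Icc 1 (min k l), sigmaMulti ![B, C, B * C] ![k - i, l - i, i]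
      = ∑ i ∈ range (min k l), sigmaMulti ![B, C, B * C] ![k - (i + 1), l - (i + 1), i + 1] := by
    rw [← Finset.Ico_add_one_right_eq_Icc, Finset.sum_Ico_eq_sum_range]
    simp only [Nat.succ_sub_one, Nat.add_sub_cancel]
    exact Finset.sum_congr rfl fun i _ => by rw [Nat.add_comm]
  rw [e2]
  linarith [e1, e3]
end

section
/- Let F(y) = α(y) + β(y) be a Randers norm on ℝ^{m+1}. Then for every y ≠ 0, the determinant of the (m+1)×(m+1) matrix G(y) with entries G(y)_{ij} = g_y(e_i, e_j) in the standard orthonormal basis (e_i) satisfies det G(y) = ( F(y)/α(y) )^{m+2}. -/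
open RealInnerProductSpace

variable {E : Type*} [NormedAddCommGroup E] [InnerProductSpace ℝ E]

lemma hasDerivAt_norm_line_s17 (x v : E) (hx : x ≠ 0) :
    HasDerivAt (fun t : ℝ => ‖x + t • v‖) (⟪x, v⟫ / ‖x‖) 0 := by
  have hline : HasDerivAt (fun t : ℝ => x + t • v) v 0 := by
    simpa using ((hasDerivAt_id (0:ℝ)).smul_const v).const_add x
  have hinner : HasDerivAt (fun t : ℝ => ⟪x + t • v, x + t • v⟫) (2 * ⟪x, v⟫) 0 := by
    have := HasDerivAt.inner ℝ hline hline
    simp only [zero_smul, add_zero] at this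
    refine this.congr_deriv ?_
    rw [real_inner_comm v x]; ring
  have hne : ⟪x + (0:ℝ) • v, x + (0:ℝ) • v⟫ ≠ 0 := by
    simp only [zero_smul, add_zero]
    exact fun h => hx (inner_self_eq_zero.mp h)
  have := hinner.sqrt hne
  simp only [zero_smul, add_zero] at this
  have hsq : ∀ z : E, Real.sqrt ⟪z, z⟫ = ‖z‖ := fun z => by
    rw [real_inner_self_eq_norm_sq]; exact Real.sqrt_sq (norm_nonneg z)
  have heq : (fun y : ℝ => Real.sqrt ⟪x + y • v, x + y • v⟫) = fun y => ‖x + y • v‖ :=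
    funext fun z => hsq _
  rw [heq] at this
  convert this using 1
  rw [hsq x]
  have : ‖x‖ ≠ 0 := norm_ne_zero_iff.mpr hx
  field_simp

lemma hasDerivAt_line_clm (β : E →L[ℝ] ℝ) (x v : E) :
    HasDerivAt (fun t : ℝ => β (x + t • v)) (β v) 0 := by
  have hline : HasDerivAt (fun t : ℝ => x + t • v) v 0 := by
    simpa using ((hasDerivAt_id (0:ℝ)).smul_const v).const_add x
  exact β.hasFDerivAt.comp_hasDerivAt 0 hline

lemma hasDerivAt_inner_line (x v w : E) :
    HasDerivAt (fun t : ℝ => ⟪x + t • w, v⟫) (⟪w, v⟫) 0 := by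
  have hline : HasDerivAt (fun t : ℝ => x + t • w) w 0 := by
    simpa using ((hasDerivAt_id (0:ℝ)).smul_const w).const_add x
  have := HasDerivAt.inner ℝ hline (hasDerivAt_const (0:ℝ) v)
  simpa using this

lemma hasDerivAt_F2 (β : E →L[ℝ] ℝ) (x v : E) (hx : x ≠ 0) :
    HasDerivAt (fun t : ℝ => (randersF β (x + t • v)) ^ 2)
      (2 * randersF β x * (⟪x, v⟫ / ‖x‖ + β v)) 0 := by
  have hF : HasDerivAt (fun t : ℝ => randersF β (x + t • v)) (⟪x, v⟫ / ‖x‖ + β v) 0 :=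
    (hasDerivAt_norm_line_s17 x v hx).add (hasDerivAt_line_clm β x v)
  have := hF.fun_pow 2
  simpa [randersF] using this

lemma deriv_F2 (β : E →L[ℝ] ℝ) (x v : E) (hx : x ≠ 0) :
    deriv (fun t : ℝ => (randersF β (x + t • v)) ^ 2) 0
      = 2 * randersF β x * (⟪x, v⟫ / ‖x‖ + β v) :=
  (hasDerivAt_F2 β x v hx).deriv

lemma gTensor_formula (β : E →L[ℝ] ℝ) (y u v : E) (hy : y ≠ 0) :
    gTensor β y u v = (⟪y, u⟫ / ‖y‖ + β u) * (⟪y, v⟫ / ‖y‖ + β v)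
      + randersF β y * (⟪u, v⟫ * ‖y‖ - ⟪y, v⟫ * (⟪y, u⟫ / ‖y‖)) / ‖y‖ ^ 2 := by
  have hyn : ‖y‖ ≠ 0 := norm_ne_zero_iff.mpr hy
  have hne : ∀ᶠ s : ℝ in nhds 0, y + s • u ≠ 0 := by
    have hcont : Continuous fun s : ℝ => y + s • u := by continuity
    have : ∀ᶠ s : ℝ in nhds 0, (y + s • u) ∈ {x : E | x ≠ 0} := by
      apply hcont.continuousAt.eventually_mem
      simp only [zero_smul, add_zero]
      exact isOpen_compl_singleton.mem_nhds hy
    exact this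
  have heq : (fun s : ℝ => deriv (fun t : ℝ => (randersF β (y + s • u + t • v)) ^ 2) 0)
      =ᶠ[nhds 0] fun s : ℝ =>
        2 * randersF β (y + s • u) * (⟪y + s • u, v⟫ / ‖y + s • u‖ + β v) := by
    filter_upwards [hne] with s hs
    exact deriv_F2 β (y + s • u) v hs
  have hA : HasDerivAt (fun s : ℝ => 2 * randersF β (y + s • u))
      (2 * (⟪y, u⟫ / ‖y‖ + β u)) 0 := by
    have hF : HasDerivAt (fun s : ℝ => randersF β (y + s • u)) (⟪y, u⟫ / ‖y‖ + β u) 0 :=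
      (hasDerivAt_norm_line_s17 y u hy).add (hasDerivAt_line_clm β y u)
    simpa using hF.const_mul 2
  have hB : HasDerivAt (fun s : ℝ => ⟪y + s • u, v⟫ / ‖y + s • u‖ + β v)
      ((⟪u, v⟫ * ‖y‖ - ⟪y, v⟫ * (⟪y, u⟫ / ‖y‖)) / ‖y‖ ^ 2) 0 := by
    have hq := (hasDerivAt_inner_line y v u).div (hasDerivAt_norm_line_s17 y u hy) (by simpa using hyn)
    simp only [zero_smul, add_zero] at hq
    simpa using hq.add_const (β v)
  have hprod := hA.mul hB
  simp only [zero_smul, add_zero] at hprod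
  have hd : deriv (fun s : ℝ => deriv (fun t : ℝ => (randersF β (y + s • u + t • v)) ^ 2) 0) 0
      = 2 * (⟪y, u⟫ / ‖y‖ + β u) * (⟪y, v⟫ / ‖y‖ + β v)
        + 2 * randersF β y * ((⟪u, v⟫ * ‖y‖ - ⟪y, v⟫ * (⟪y, u⟫ / ‖y‖)) / ‖y‖ ^ 2) := by
    rw [heq.deriv_eq]
    exact hprod.deriv
  rw [gTensor, hd]
  ring

theorem stmt17 {m : ℕ}
    (β : EuclideanSpace ℝ (Fin (m + 1)) →L[ℝ] ℝ) (hβ : ‖β‖ < 1)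
    (y : EuclideanSpace ℝ (Fin (m + 1))) (hy : y ≠ 0) :
    Matrix.det (Matrix.of fun i j : Fin (m + 1) =>
        gTensor β y (EuclideanSpace.single i 1) (EuclideanSpace.single j 1)) =
      (randersF β y / ‖y‖) ^ (m + 2) := by
  have hyn : ‖y‖ ≠ 0 := norm_ne_zero_iff.mpr hy
  have hypos : (0:ℝ) < ‖y‖ := norm_pos_iff.mpr hy
  have hβy : |β y| ≤ ‖β‖ * ‖y‖ := by
    have := β.le_opNorm y
    simpa [Real.norm_eq_abs] using this
  have hFpos : 0 < randersF β y := by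
    have h1 : ‖β‖ * ‖y‖ < 1 * ‖y‖ := mul_lt_mul_of_pos_right hβ hypos
    have h2 : -(β y) ≤ |β y| := neg_le_abs _
    simp only [randersF]
    nlinarith [abs_nonneg (β y)]
  obtain ⟨c, hc⟩ : ∃ c : ℝ, c = randersF β y / ‖y‖ := ⟨_, rfl⟩
  have hc0 : c ≠ 0 := by rw [hc]; exact div_ne_zero (ne_of_gt hFpos) hyn
  have hcy : c * ‖y‖ = ‖y‖ + β y := by
    rw [hc, randersF]; field_simp
  have hFc : randersF β y = c * ‖y‖ := by rw [hcy, randersF]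
  obtain ⟨b, hb⟩ : ∃ b : Fin (m+1) → ℝ, b = fun i => β (EuclideanSpace.single i 1) := ⟨_, rfl⟩
  -- sum identities
  have hS1 : ∑ i, y i * y i = ‖y‖ ^ 2 := by
    have := real_inner_self_eq_norm_sq y
    rw [← this, PiLp.inner_apply]
    simp [RCLike.inner_apply]
    simp [sq]
  have hrep : (∑ i, y i • EuclideanSpace.single i (1:ℝ)) = y := by
    have := (EuclideanSpace.basisFun (Fin (m+1)) ℝ).sum_repr y
    simpa [EuclideanSpace.basisFun_apply, EuclideanSpace.basisFun_repr] using this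
  have hS2 : ∑ i, y i * b i = β y := by
    conv_rhs => rw [← hrep]
    rw [map_sum]
    simp [hb]
  have hsum : ∀ A B : ℝ, (∑ i, (A * (y i * y i) + B * (y i * b i))) = A * ‖y‖ ^ 2 + B * β y := by
    intro A B
    rw [Finset.sum_add_distrib, ← Finset.mul_sum, ← Finset.mul_sum, hS1, hS2]
  -- matrices
  obtain ⟨U, hU⟩ : ∃ U : Matrix (Fin (m+1)) (Fin 2) ℝ,
      U = Matrix.of fun i => ![c⁻¹ * (y i / ‖y‖), c⁻¹ * (y i / ‖y‖ + b i)] := ⟨_, rfl⟩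
  obtain ⟨W, hW⟩ : ∃ W : Matrix (Fin 2) (Fin (m+1)) ℝ,
      W = Matrix.of ![fun j => -(c * (y j / ‖y‖)), fun j => y j / ‖y‖ + b j] := ⟨_, rfl⟩
  have hG : (Matrix.of fun i j : Fin (m + 1) =>
      gTensor β y (EuclideanSpace.single i 1) (EuclideanSpace.single j 1))
      = c • (1 + U * W) := by
    ext i j
    have hg := gTensor_formula β y (EuclideanSpace.single i 1) (EuclideanSpace.single j 1) hy
    have h1 : ⟪y, EuclideanSpace.single i (1:ℝ)⟫ = y i := by
      rw [EuclideanSpace.inner_single_right]; simp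
    have h2 : ⟪y, EuclideanSpace.single j (1:ℝ)⟫ = y j := by
      rw [EuclideanSpace.inner_single_right]; simp
    have h3 : ⟪EuclideanSpace.single i (1:ℝ), EuclideanSpace.single j (1:ℝ)⟫
        = if i = j then (1:ℝ) else 0 := by
      rw [EuclideanSpace.inner_single_left]
      simp [EuclideanSpace.single_apply, eq_comm]
    simp only [Matrix.of_apply, Matrix.smul_apply, Matrix.add_apply, Matrix.one_apply,
      Matrix.mul_apply, Fin.sum_univ_two, smul_eq_mul]
    rw [hg, h1, h2, h3, hFc]
    simp only [hU, hW, hb, Matrix.of_apply, Matrix.cons_val_zero, Matrix.cons_val_one,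
      Matrix.head_cons]
    by_cases hij : i = j
    · simp only [if_pos hij]
      field_simp
      ring
    · simp only [if_neg hij]
      field_simp
      ring
  rw [hG, Matrix.det_smul, Matrix.det_one_add_mul_comm]
  have e00 : (W * U) 0 0 = -1 := by
    rw [Matrix.mul_apply]
    have h : ∀ i ∈ Finset.univ, W 0 i * U i 0
        = (-(c * c⁻¹ * (‖y‖⁻¹ * ‖y‖⁻¹))) * (y i * y i) + 0 * (y i * b i) := by
      intro i _
      simp only [hU, hW, Matrix.of_apply, Matrix.cons_val_zero, Matrix.cons_val_one,
        Matrix.head_cons]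
      ring
    rw [Finset.sum_congr rfl h, hsum, mul_inv_cancel₀ hc0]
    field_simp
    ring
  have e01 : (W * U) 0 1 = -c := by
    rw [Matrix.mul_apply]
    have h : ∀ i ∈ Finset.univ, W 0 i * U i 1
        = (-(c * c⁻¹ * (‖y‖⁻¹ * ‖y‖⁻¹))) * (y i * y i)
          + (-(c * c⁻¹ * ‖y‖⁻¹)) * (y i * b i) := by
      intro i _
      simp only [hU, hW, Matrix.of_apply, Matrix.cons_val_zero, Matrix.cons_val_one,
        Matrix.head_cons]
      ring
    rw [Finset.sum_congr rfl h, hsum, mul_inv_cancel₀ hc0]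
    field_simp
    linear_combination hcy
  have e10 : (W * U) 1 0 = 1 := by
    rw [Matrix.mul_apply]
    have h : ∀ i ∈ Finset.univ, W 1 i * U i 0
        = (c⁻¹ * (‖y‖⁻¹ * ‖y‖⁻¹)) * (y i * y i) + (c⁻¹ * ‖y‖⁻¹) * (y i * b i) := by
      intro i _
      simp only [hU, hW, Matrix.of_apply, Matrix.cons_val_zero, Matrix.cons_val_one,
        Matrix.head_cons]
      ring
    rw [Finset.sum_congr rfl h, hsum]
    field_simp
    linear_combination (-1 : ℝ) * hcy
  have hdet2 : (1 + W * U).det = c := by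
    rw [Matrix.det_fin_two]
    simp only [Matrix.add_apply, Matrix.one_apply_eq,
      Matrix.one_apply_ne (by decide : (0:Fin 2) ≠ 1),
      Matrix.one_apply_ne (by decide : (1:Fin 2) ≠ 0), e00, e01, e10]
    ring
  rw [hdet2, Fintype.card_fin, ← hc]
  ring
end

section
/- Let b ∈ ℝⁿ (n ≥ 1) with Euclidean norm ‖b‖ < 1, and let B = { y ∈ ℝⁿ : ‖y‖ + ⟨b,y⟩ < 1 } be the unit ball of the Randers norm F(y) = ‖y‖ + ⟨b,y⟩. Then the Lebesgue measure of B equals (1 − ‖b‖²)^{−(n+1)/2} times the Lebesgue measure of the Euclidean unit ball { y ∈ ℝⁿ : ‖y‖ < 1 }. Consequently, the Busemann–Hausdorff volume density of the Randers norm, σ_F = vol(𝔹ⁿ)/vol(B), equals c^{n+1} where c = (1 − ‖b‖²)^{1/2}. -/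
open RealInnerProductSpace

set_option maxHeartbeats 1000000 in
theorem stmt19 {n : ℕ} (hn : 1 ≤ n) (b : EuclideanSpace ℝ (Fin n)) (hb : ‖b‖ < 1) :
    MeasureTheory.volume {y : EuclideanSpace ℝ (Fin n) | ‖y‖ + ⟪b, y⟫ < 1} =
      ENNReal.ofReal ((1 - ‖b‖ ^ 2) ^ (-(((n : ℝ) + 1) / 2))) *
        MeasureTheory.volume (Metric.ball (0 : EuclideanSpace ℝ (Fin n)) 1) ∧
    MeasureTheory.volume (Metric.ball (0 : EuclideanSpace ℝ (Fin n)) 1) /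
        MeasureTheory.volume {y : EuclideanSpace ℝ (Fin n) | ‖y‖ + ⟪b, y⟫ < 1} =
      ENNReal.ofReal ((Real.sqrt (1 - ‖b‖ ^ 2)) ^ (n + 1)) := by
  classical
  haveI : NeZero n := ⟨by omega⟩
  have hc : (0:ℝ) < 1 - ‖b‖^2 := by nlinarith [norm_nonneg b]
  -- abbreviations
  obtain ⟨c, hcdef⟩ : ∃ x : ℝ, 1 - ‖b‖^2 = x := ⟨_, rfl⟩
  rw [hcdef] at hc
  obtain ⟨s, hsdef⟩ : ∃ x : ℝ, Real.sqrt c = x := ⟨_, rfl⟩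
  have hs : 0 < s := hsdef ▸ Real.sqrt_pos.2 hc
  have hs2 : s^2 = c := hsdef ▸ Real.sq_sqrt hc.le
  have hsn1 : (0:ℝ) < s ^ (n+1) := by positivity
  -- the key volume identity
  have key : MeasureTheory.volume {y : EuclideanSpace ℝ (Fin n) | ‖y‖ + ⟪b, y⟫ < 1} =
      ENNReal.ofReal ((s ^ (n+1))⁻¹) *
        MeasureTheory.volume (Metric.ball (0 : EuclideanSpace ℝ (Fin n)) 1) := by
    by_cases hb0 : b = 0
    · subst hb0
      have hset : {y : EuclideanSpace ℝ (Fin n) | ‖y‖ + ⟪(0 : EuclideanSpace ℝ (Fin n)), y⟫ < 1}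
          = Metric.ball (0 : EuclideanSpace ℝ (Fin n)) 1 := by
        ext y; simp [mem_ball_zero_iff]
      have hs1 : s = 1 := by
        rw [← hsdef, ← hcdef]; simp
      rw [hset, hs1]
      simp
    · -- b ≠ 0
      have hbn : 0 < ‖b‖ := norm_pos_iff.2 hb0
      have hb2 : (0:ℝ) < ‖b‖^2 := by positivity
      obtain ⟨ρ, hρdef⟩ : ∃ x : ℝ, (c - s)/‖b‖^2 = x := ⟨_, rfl⟩
      have hρB : ρ * ‖b‖ * ‖b‖ = c - s := by
        rw [← hρdef]; field_simp
      set L : EuclideanSpace ℝ (Fin n) →ₗ[ℝ] EuclideanSpace ℝ (Fin n) :=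
        s • LinearMap.id + ρ • ((innerSL ℝ b).toLinearMap.smulRight b) with hLdef
      have hL : ∀ y, L y = s • y + (ρ * ⟪b,y⟫) • b := by
        intro y; simp [hLdef, smul_smul]
      -- orthonormal basis whose first vector is parallel to b
      have hone : Orthonormal ℝ (Set.restrict {(0 : Fin n)} (fun _ : Fin n => ‖b‖⁻¹ • b)) := by
        constructor
        · intro i; show ‖‖b‖⁻¹ • b‖ = 1; rw [norm_smul, norm_inv, norm_norm, inv_mul_cancel₀ (norm_ne_zero_iff.2 hb0)]
        · intro i j hij
          exact absurd (Subtype.ext ((i.2 : i.1 ∈ ({0}:Set (Fin n))).trans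
            (j.2 : j.1 ∈ ({0}:Set (Fin n))).symm)) hij
      obtain ⟨v, hv⟩ := hone.exists_orthonormalBasis_extension_of_card_eq (by simp)
      have hv0 : v 0 = ‖b‖⁻¹ • b := hv 0 rfl
      have hbv : b = ‖b‖ • v 0 := by rw [hv0, smul_smul, mul_inv_cancel₀ hbn.ne', one_smul]
      have hvij := orthonormal_iff_ite.mp v.orthonormal
      have hLv : ∀ j, L (v j) = (if j = 0 then c else s) • v j := by
        intro j
        rw [hL, hbv]
        by_cases hj : j = 0
        · subst hj
          simp only [real_inner_smul_left, real_inner_smul_right, hvij, if_pos rfl, mul_one,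
            smul_smul, if_pos]
          rw [← add_smul]
          congr 1
          linarith [hρB]
        · have h0j : ¬ ((0:Fin n) = j) := fun h => hj h.symm
          simp only [real_inner_smul_left, real_inner_smul_right, hvij, if_neg h0j, if_neg hj,
            mul_zero, zero_smul, smul_zero, add_zero]
      -- determinant of L
      have hdet : LinearMap.det L = c * s^(n-1) := by
        rw [← LinearMap.det_toMatrix v.toBasis]
        have hmat : LinearMap.toMatrix v.toBasis v.toBasis L
            = Matrix.diagonal (fun i => if i = 0 then c else s) := by
          ext i j
          rw [LinearMap.toMatrix_apply, OrthonormalBasis.coe_toBasis,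
            OrthonormalBasis.coe_toBasis_repr_apply, OrthonormalBasis.repr_apply_apply,
            hLv j, real_inner_smul_right, hvij, Matrix.diagonal_apply]
          by_cases hij : i = j
          · subst hij; simp
          · have h1 : ¬ (j = i) := fun h => hij h.symm
            simp [hij, h1]
        rw [hmat, Matrix.det_diagonal,
          ← Finset.mul_prod_erase Finset.univ _ (Finset.mem_univ (0 : Fin n)), if_pos rfl]
        congr 1
        have h2 : ∀ i ∈ Finset.univ.erase (0 : Fin n), (if i = 0 then c else s) = s := by
          intro i hi; simp [(Finset.mem_erase.mp hi).1]
        rw [Finset.prod_congr rfl h2, Finset.prod_const,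
          Finset.card_erase_of_mem (Finset.mem_univ _), Finset.card_univ, Fintype.card_fin]
      have hdetpos : 0 < LinearMap.det L := by rw [hdet]; positivity
      -- set identity
      have hB : ‖b‖^2 = 1 - s^2 := by rw [hs2, ← hcdef]; ring
      have hne : (1:ℝ) - s^2 ≠ 0 := by rw [← hB]; positivity
      have hset : {y : EuclideanSpace ℝ (Fin n) | ‖y‖ + ⟪b, y⟫ < 1}
          = L ⁻¹' (Metric.ball (-b) 1) := by
        ext y
        simp only [Set.mem_setOf_eq, Set.mem_preimage, Metric.mem_ball, dist_eq_norm,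
          sub_neg_eq_add]
        set τ : ℝ := ⟪b, y⟫ with hτ
        have hsum : L y + b = s • y + (ρ * τ + 1) • b := by
          rw [hL, add_smul, one_smul, add_assoc]
        have expand : ‖L y + b‖^2
            = s^2*‖y‖^2 + 2*(s*(ρ*τ+1)*(⟪y,b⟫)) + (ρ*τ+1)^2*‖b‖^2 := by
          rw [hsum, norm_add_sq_real, real_inner_smul_left, real_inner_smul_right, norm_smul,
            norm_smul, Real.norm_eq_abs, Real.norm_eq_abs, abs_of_pos hs, mul_pow, mul_pow,
            sq_abs]
          ring
        have hyb : ⟪y,b⟫ = τ := by rw [hτ, real_inner_comm]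
        have hid : ‖L y + b‖^2 = 1 + c * (‖y‖^2 - (1-τ)^2) := by
          rw [expand, hyb, ← hρdef, hB, ← hs2]
          field_simp
          ring
        constructor
        · intro h
          have h1 : ‖y‖ < 1 - τ := by linarith
          have h2 : ‖y‖^2 < (1-τ)^2 := by nlinarith [norm_nonneg y]
          nlinarith [hid, norm_nonneg (L y + b), hc]
        · intro h
          have h2 : ‖L y + b‖^2 < 1 := by nlinarith [norm_nonneg (L y + b)]
          have h3 : ‖y‖^2 < (1-τ)^2 := by nlinarith [hid]
          nlinarith [abs_real_inner_le_norm b y, le_abs_self τ, norm_nonneg y,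
            mul_nonneg (sub_nonneg.2 hb.le) (norm_nonneg y)]
      rw [hset, MeasureTheory.Measure.addHaar_preimage_linearMap _ hdetpos.ne',
        MeasureTheory.Measure.addHaar_ball_center]
      congr 2
      rw [hdet, abs_of_pos (by positivity : (0:ℝ) < (c * s^(n-1))⁻¹)]
      congr 1
      rw [← hs2]
      rw [← pow_add]
      congr 1
      omega
  have hexp : (1 - ‖b‖ ^ 2 : ℝ) ^ (-(((n : ℝ) + 1) / 2)) = (s ^ (n+1))⁻¹ := by
    rw [hcdef, Real.rpow_neg hc.le]
    congr 1
    rw [← hsdef, Real.sqrt_eq_rpow, ← Real.rpow_natCast (c ^ ((1:ℝ)/2)) (n+1),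
      ← Real.rpow_mul hc.le]
    congr 1
    push_cast
    ring
  constructor
  · rw [key, hexp]
  · rw [key]
    have V0 : MeasureTheory.volume (Metric.ball (0 : EuclideanSpace ℝ (Fin n)) 1) ≠ 0 :=
      (Metric.measure_ball_pos _ _ one_pos).ne'
    have Vt : MeasureTheory.volume (Metric.ball (0 : EuclideanSpace ℝ (Fin n)) 1) ≠ ⊤ :=
      MeasureTheory.measure_ball_lt_top.ne
    have ha0 : (ENNReal.ofReal (s ^ (n+1)))⁻¹ ≠ 0 :=
      ENNReal.inv_ne_zero.2 ENNReal.ofReal_ne_top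
    have hat : (ENNReal.ofReal (s ^ (n+1)))⁻¹ ≠ ⊤ := by
      rw [ENNReal.inv_ne_top]
      exact (ENNReal.ofReal_pos.2 hsn1).ne'
    rw [ENNReal.ofReal_inv_of_pos hsn1]
    rw [ENNReal.div_eq_inv_mul, ENNReal.mul_inv (Or.inl ha0) (Or.inr V0)]
    rw [inv_inv, mul_assoc, ENNReal.inv_mul_cancel V0 Vt, mul_one]
    rw [← hsdef, hcdef]
end
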